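/- arXiv:1506.04181 — 6 statements merged into one kernel-verified Lean document; each statement's English description precedes it below -/
import Mathlib

section
/- Let $\alpha \in [1,2]$. Define $\varphi(x) = (|x|^\alpha + |1-x|^\alpha - 1)/(|x|^{\alpha/2}|1-x|^{\alpha/2})$ for $x \in \mathbb{R} \setminus \{0,1\}$, with $\varphi(0)=\varphi(1)=0$. Then $\varphi$ is bounded on $\mathbb{R}$ with $|\varphi(x)| \leq 2$ for all $x$. -/
/-!
Put `a = |x| ^ (α/2)` and `b = |1 - x| ^ (α/2)`. Since `α/2 ∈ [0, 1]`, the map `u ↦ u ^ (α/2)` is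
monotone and subadditive on `[0, ∞)`, so it sends the "triangle" with sides `|x|`, `|1 - x|`, `1`
to a triangle with sides `a`, `b`, `1`. The triangle inequalities `(a - b)² ≤ 1 ≤ (a + b)²` say
exactly that `|a² + b² - 1| ≤ 2ab`, which is the bound `|φ x| ≤ 2`.
-/

open Real

/-- The symmetric coefficient function from the Leibniz lemma. -/
noncomputable def phiFun (α : ℝ) (x : ℝ) : ℝ :=
  if x = 0 ∨ x = 1 then 0
  else (|x| ^ α + |1 - x| ^ α - 1) / (|x| ^ (α / 2) * |1 - x| ^ (α / 2))

lemma rpow_le_rpow_add_rpow_of_le_add {t u v w : ℝ} (hu : 0 ≤ u) (hv : 0 ≤ v) (hw : 0 ≤ w)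
    (ht0 : 0 ≤ t) (ht1 : t ≤ 1) (h : u ≤ v + w) : u ^ t ≤ v ^ t + w ^ t :=
  (rpow_le_rpow hu h ht0).trans (rpow_add_le_add_rpow hv hw ht0 ht1)

lemma abs_sq_add_sq_sub_sq_le {a b c : ℝ} (h₁ : |a - b| ≤ c) (h₂ : c ≤ a + b) :
    |a ^ 2 + b ^ 2 - c ^ 2| ≤ 2 * a * b := by
  have hc : 0 ≤ c := (abs_nonneg _).trans h₁
  have hlow : (a - b) ^ 2 ≤ c ^ 2 := sq_le_sq' (abs_le.1 h₁).1 (abs_le.1 h₁).2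
  have hupp : c ^ 2 ≤ (a + b) ^ 2 := pow_le_pow_left₀ hc h₂ 2
  rw [abs_le]
  constructor <;> nlinarith

lemma abs_rpow_add_rpow_sub_rpow_le {s u v w : ℝ} (hu : 0 ≤ u) (hv : 0 ≤ v) (hw : 0 ≤ w)
    (hs0 : 0 ≤ s) (hs2 : s ≤ 2) (huv : u ≤ v + w) (hvu : v ≤ u + w) (hwuv : w ≤ u + v) :
    |u ^ s + v ^ s - w ^ s| ≤ 2 * u ^ (s / 2) * v ^ (s / 2) := by
  have ht0 : 0 ≤ s / 2 := by linarith
  have ht1 : s / 2 ≤ 1 := by linarith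
  have hsq : ∀ {r : ℝ}, 0 ≤ r → r ^ s = (r ^ (s / 2)) ^ 2 := fun hr => by
    rw [← rpow_natCast, ← rpow_mul hr]; norm_num
  rw [hsq hu, hsq hv, hsq hw]
  refine abs_sq_add_sq_sub_sq_le (abs_sub_le_iff.2 ⟨?_, ?_⟩) ?_
  · linarith [rpow_le_rpow_add_rpow_of_le_add hu hv hw ht0 ht1 huv]
  · linarith [rpow_le_rpow_add_rpow_of_le_add hv hu hw ht0 ht1 hvu]
  · exact rpow_le_rpow_add_rpow_of_le_add hw hu hv ht0 ht1 hwuv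

theorem phi_bounded (α : ℝ) (hα : 1 ≤ α) (hα2 : α ≤ 2) (x : ℝ) :
    |phiFun α x| ≤ 2 := by
  unfold phiFun
  split_ifs with hx
  · norm_num
  obtain ⟨hx0, hx1⟩ := not_or.1 hx
  have hpos : 0 < |x| ^ (α / 2) * |1 - x| ^ (α / 2) :=
    mul_pos (rpow_pos_of_pos (abs_pos.2 hx0) _)
      (rpow_pos_of_pos (abs_pos.2 (sub_ne_zero.2 (Ne.symm hx1))) _)
  have key := abs_rpow_add_rpow_sub_rpow_le (abs_nonneg x) (abs_nonneg (1 - x)) zero_le_one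
    (by linarith) hα2 (by simpa [abs_sub_comm] using abs_sub_le x 1 0)
    (by simpa [add_comm] using abs_sub_le 1 0 x) (by simpa [add_comm] using abs_sub_le 1 x 0)
  rw [one_rpow, mul_assoc] at key
  rw [abs_div, abs_of_pos hpos, div_le_iff₀ hpos]
  exact key
end

section
/- For every $l, k \in \mathbb{Z}$ with $1 \leq \alpha \leq 2$, one has $\big| |l|^\alpha + |k-l|^\alpha - |k|^\alpha \big| \leq 2\,|l|^{\alpha/2}|k-l|^{\alpha/2}$. -/
/-!
Put `p = α / 2 ∈ [1/2, 1]`. Since `t ↦ t ^ p` is monotone and subadditive on `[0, ∞)`, the numbers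
`A = |l| ^ p`, `B = |k - l| ^ p`, `C = |k| ^ p` again satisfy the triangle inequalities, and
`|l| ^ α + |k - l| ^ α - |k| ^ α = A² + B² - C²`. For any such "triangle" `|A² + B² - C²| ≤ 2AB`,
since `(A - B)² ≤ C² ≤ (A + B)²` (the law of cosines with `|cos| ≤ 1`).
-/

open Real

lemma abs_sq_add_sq_sub_sq_le_s1 {A B C : ℝ} (hC : 0 ≤ C) (hAB : |A - B| ≤ C) (hCAB : C ≤ A + B) :
    |A ^ 2 + B ^ 2 - C ^ 2| ≤ 2 * A * B := by
  have hlow : (A - B) ^ 2 ≤ C ^ 2 := sq_le_sq' (abs_le.mp hAB).1 (abs_le.mp hAB).2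
  have hupp : C ^ 2 ≤ (A + B) ^ 2 := pow_le_pow_left₀ hC hCAB 2
  rw [abs_le]
  constructor <;> nlinarith

lemma abs_add_rpow_le {p : ℝ} (hp0 : 0 ≤ p) (hp1 : p ≤ 1) (x y : ℝ) :
    |x + y| ^ p ≤ |x| ^ p + |y| ^ p :=
  (rpow_le_rpow (abs_nonneg _) (abs_add_le x y) hp0).trans
    (rpow_add_le_add_rpow (abs_nonneg x) (abs_nonneg y) hp0 hp1)

lemma abs_sub_rpow_abs_rpow_le_abs_add_rpow {p : ℝ} (hp0 : 0 ≤ p) (hp1 : p ≤ 1) (x y : ℝ) :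
    |(|x| ^ p - |y| ^ p)| ≤ |x + y| ^ p := by
  have hx : |x| ^ p ≤ |x + y| ^ p + |y| ^ p := by
    simpa [abs_neg] using abs_add_rpow_le hp0 hp1 (x + y) (-y)
  have hy : |y| ^ p ≤ |x + y| ^ p + |x| ^ p := by
    simpa [abs_neg, add_comm] using abs_add_rpow_le hp0 hp1 (x + y) (-x)
  rw [abs_sub_le_iff]
  constructor <;> linarith

lemma rpow_eq_rpow_half_sq {x : ℝ} (hx : 0 ≤ x) (α : ℝ) : x ^ α = (x ^ (α / 2)) ^ 2 := by
  rw [← rpow_natCast, ← rpow_mul hx]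
  norm_num

lemma abs_abs_rpow_add_abs_rpow_sub_abs_add_rpow_le {α : ℝ} (hα0 : 0 ≤ α) (hα2 : α ≤ 2)
    (x y : ℝ) :
    |(|x|) ^ α + |y| ^ α - |x + y| ^ α| ≤ 2 * |x| ^ (α / 2) * |y| ^ (α / 2) := by
  have hp0 : 0 ≤ α / 2 := by linarith
  have hp1 : α / 2 ≤ 1 := by linarith
  simp only [rpow_eq_rpow_half_sq (abs_nonneg _) α]
  exact abs_sq_add_sq_sub_sq_le_s1 (by positivity)
    (abs_sub_rpow_abs_rpow_le_abs_add_rpow hp0 hp1 x y) (abs_add_rpow_le hp0 hp1 x y)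

theorem abs_pow_alpha_triangle (α : ℝ) (hα : 1 ≤ α) (hα2 : α ≤ 2) (l k : ℤ) :
    |(|(l : ℝ)|) ^ α + (|((k - l : ℤ) : ℝ)|) ^ α - (|(k : ℝ)|) ^ α| ≤
      2 * (|(l : ℝ)|) ^ (α / 2) * (|((k - l : ℤ) : ℝ)|) ^ (α / 2) := by
  have hk : (k : ℝ) = l + ((k - l : ℤ) : ℝ) := by push_cast; ring
  rw [hk]
  exact abs_abs_rpow_add_abs_rpow_sub_abs_add_rpow_le (by linarith) hα2 _ _
end

section
/- Let $v \in H^{1/2}_+(\mathbb{T})$, i.e. $v \in L^2(\mathbb{T})$ with Fourier coefficients $v_k$ vanishing for $k < 0$ and $\sum_{k \geq 0}(1+k)|v_k|^2 < \infty$. Let $h \in L^2_+(\mathbb{T})$ (negative Fourier coefficients vanish). Then the Hankel operator $H_v(h) := \Pi_+(v \bar{h})$, where $\Pi_+$ projects onto nonnegative Fourier modes, satisfies $\|H_v(h)\|_{L^2} \leq \|v\|_{H^{1/2}}\|h\|_{L^2}$, where $\|v\|_{H^{1/2}}^2 = \sum_{k \geq 0}(1+k)|v_k|^2$. -/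
/-!
Each coefficient `∑ⱼ v_{k+j} h̄ⱼ` is an `ℓ²` inner product, so by Cauchy–Schwarz its square is
at most `(∑ⱼ |v_{k+j}|²) ‖h‖²`. Summing over `k`, every `|v_l|²` is counted once for each
splitting `l = k + j`, i.e. `1 + l` times, which is exactly the `H^{1/2}` weight.
-/

open Finset

theorem norm_tsum_mul_conj_sq_le {ι 𝕜 : Type*} [RCLike 𝕜] {u w : ι → 𝕜}
    (hu : Summable fun i => ‖u i‖ ^ 2) (hw : Summable fun i => ‖w i‖ ^ 2) :
    ‖∑' i, u i * starRingEnd 𝕜 (w i)‖ ^ 2 ≤ (∑' i, ‖u i‖ ^ 2) * ∑' i, ‖w i‖ ^ 2 := by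
  let U : lp (fun _ : ι => 𝕜) 2 := ⟨u, memℓp_gen (by simpa using hu)⟩
  let W : lp (fun _ : ι => 𝕜) 2 := ⟨w, memℓp_gen (by simpa using hw)⟩
  have hnorm (f : lp (fun _ : ι => 𝕜) 2) : ‖f‖ ^ 2 = ∑' i, ‖f i‖ ^ 2 := by
    simpa using lp.norm_rpow_eq_tsum (by norm_num) f
  have hinner : inner 𝕜 W U = ∑' i, u i * starRingEnd 𝕜 (w i) := by
    rw [lp.inner_eq_tsum]
    simp [U, W]
  rw [← hinner, show ∑' i, ‖u i‖ ^ 2 = ‖U‖ ^ 2 from (hnorm U).symm,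
    show ∑' i, ‖w i‖ ^ 2 = ‖W‖ ^ 2 from (hnorm W).symm, ← mul_pow, mul_comm]
  exact pow_le_pow_left₀ (norm_nonneg _) (norm_inner_le_norm W U) 2

theorem Summable.of_one_add_mul {g : ℕ → ℝ} (hg : 0 ≤ g)
    (hs : Summable fun n : ℕ => (1 + (n : ℝ)) * g n) : Summable g :=
  hs.of_nonneg_of_le hg fun n => le_mul_of_one_le_left (hg n) (by simp)

theorem hasSum_tsum_nat_add_of_nonneg {g : ℕ → ℝ} (hg : 0 ≤ g)
    (hs : Summable fun n : ℕ => (1 + (n : ℝ)) * g n) :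
    HasSum (fun k => ∑' j, g (k + j)) (∑' n : ℕ, (1 + (n : ℝ)) * g n) := by
  have hfiber (n : ℕ) : ∑' _ : antidiagonal n, g n = (1 + (n : ℝ)) * g n := by
    simp [tsum_fintype, add_comm]
  have hsigma : HasSum (fun x : Σ n, antidiagonal n => g x.1)
      (∑' n : ℕ, (1 + (n : ℝ)) * g n) := by
    have hsum : Summable fun x : Σ n, antidiagonal n => g x.1 :=
      (summable_sigma_of_nonneg fun x => hg _).2
        ⟨fun n => (hasSum_fintype _).summable, by simpa only [hfiber] using hs⟩
    simpa only [hsum.tsum_sigma' fun n => (hasSum_fintype _).summable, hfiber] using hsum.hasSum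
  have hprod : HasSum (fun p : ℕ × ℕ => g (p.1 + p.2)) (∑' n : ℕ, (1 + (n : ℝ)) * g n) := by
    rw [← HasAntidiagonal.sigmaAntidiagonalEquivProd.hasSum_iff]
    convert hsigma using 2 with x
    exact congrArg g (mem_antidiagonal.1 x.2.2)
  exact hprod.prod_fiberwise fun k =>
    ((hs.of_one_add_mul hg).comp_injective (add_right_injective k)).hasSum

/-- Hankel operator estimate `‖H_v(h)‖_{L²} ≤ ‖v‖_{H^{1/2}} ‖h‖_{L²}`, stated at the
level of (nonnegative-frequency) Fourier coefficients: the `k`-th Fourier coefficient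
of `Π₊(v h̄)` is `∑_{l ≥ k} v_l conj (h_{l-k}) = ∑_{j ≥ 0} v_{k+j} conj (h_j)`. -/
theorem hankel_L2_bound (v h : ℕ → ℂ)
    (hv : Summable fun k : ℕ => (1 + (k : ℝ)) * ‖v k‖ ^ 2)
    (hh : Summable fun l : ℕ => ‖h l‖ ^ 2) :
    ∑' k : ℕ, ‖∑' j : ℕ, v (k + j) * starRingEnd ℂ (h j)‖ ^ 2 ≤
      (∑' k : ℕ, (1 + (k : ℝ)) * ‖v k‖ ^ 2) * ∑' l : ℕ, ‖h l‖ ^ 2 := by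
  have hvsq : 0 ≤ fun l => ‖v l‖ ^ 2 := fun l => sq_nonneg _
  have htail := hasSum_tsum_nat_add_of_nonneg hvsq hv
  have hcoeff (k : ℕ) : ‖∑' j, v (k + j) * starRingEnd ℂ (h j)‖ ^ 2 ≤
      (∑' j, ‖v (k + j)‖ ^ 2) * ∑' l, ‖h l‖ ^ 2 :=
    norm_tsum_mul_conj_sq_le ((hv.of_one_add_mul hvsq).comp_injective (add_right_injective k)) hh
  have hbound := htail.summable.mul_right (∑' l, ‖h l‖ ^ 2)
  calc ∑' k, ‖∑' j, v (k + j) * starRingEnd ℂ (h j)‖ ^ 2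
      ≤ ∑' k, (∑' j, ‖v (k + j)‖ ^ 2) * ∑' l, ‖h l‖ ^ 2 :=
        (hbound.of_nonneg_of_le (fun k => sq_nonneg _) hcoeff).tsum_le_tsum hcoeff hbound
    _ = (∑' k : ℕ, (1 + (k : ℝ)) * ‖v k‖ ^ 2) * ∑' l, ‖h l‖ ^ 2 := by
        rw [tsum_mul_right, htail.tsum_eq]
end

section
/- The function $g(x) = x \sqrt{\log(1 + 1/x^2)}$, defined for $x > 0$ and extended by $g(0) = 0$, is monotone increasing on $[0, \infty)$. -/
/-!
Squaring, `g(x)² = h(x²)` with `h(t) = t log(1 + 1/t)`, which is the slope of the chord of `log`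
from `1` to `1 + 1/t`. Since `log` is concave, that slope decreases in the right endpoint, so `h`
increases with `t`. Near `0`, `h(t) = t log(t + 1) - t log t → 0`.
-/

open Real Filter Topology Set

lemma mul_log_one_add_inv_eq_slope (t : ℝ) : t * log (1 + t⁻¹) = slope log 1 (1 + t⁻¹) := by
  rw [slope_def_field, log_one, sub_zero, add_sub_cancel_left, div_inv_eq_mul, mul_comm]

lemma monotoneOn_mul_log_one_add_inv : MonotoneOn (fun t : ℝ => t * log (1 + t⁻¹)) (Ici 0) := by
  intro s hs t ht hst
  rcases (mem_Ici.mp hs).eq_or_lt with rfl | hs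
  -- `0⁻¹ = 0`, so the value at `0` is `0`, and the chord argument needs `s > 0`.
  · simpa using mul_nonneg ht (log_nonneg (le_add_of_nonneg_right (inv_nonneg.mpr ht)))
  have hmem : ∀ {r : ℝ}, 0 < r → 1 + r⁻¹ ∈ Ioi (0 : ℝ) \ {1} := fun hr =>
    ⟨mem_Ioi.mpr (by positivity), by simp [hr.ne']⟩
  simp only [mul_log_one_add_inv_eq_slope]
  exact strictConcaveOn_log_Ioi.concaveOn.slope_anti (mem_Ioi.mpr one_pos)
    (hmem (hs.trans_le hst)) (hmem hs) (by gcongr)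

lemma tendsto_mul_log_one_add_inv_nhdsGT_zero :
    Tendsto (fun t : ℝ => t * log (1 + t⁻¹)) (𝓝[>] 0) (𝓝 0) := by
  have hcont : ContinuousAt (fun t : ℝ => t * log (t + 1) + negMulLog t) 0 :=
    (continuousAt_id.mul ((continuous_add_const 1).continuousAt.log (by norm_num))).add
      continuous_negMulLog.continuousAt
  have heq : (fun t : ℝ => t * log (t + 1) + negMulLog t) =ᶠ[𝓝[>] 0]
      fun t => t * log (1 + t⁻¹) := by
    filter_upwards [self_mem_nhdsWithin] with t (ht : 0 < t)
    rw [negMulLog, inv_eq_one_div, one_add_div ht.ne', log_div (by positivity) ht.ne', add_comm t]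
    ring
  simpa using (hcont.tendsto.mono_left nhdsWithin_le_nhds).congr' heq

lemma mul_sqrt_log_one_add_one_div_sq {x : ℝ} (hx : 0 ≤ x) :
    x * √(log (1 + 1 / x ^ 2)) = √(x ^ 2 * log (1 + (x ^ 2)⁻¹)) := by
  rw [sqrt_mul (sq_nonneg x), sqrt_sq hx, one_div]

/-- `g(x) = x √(log(1 + 1/x²))` (with `g 0 = 0`, automatic since `1/0 = 0` in Lean)
is monotone increasing on `[0, ∞)` and tends to `0` at `0⁺`. -/
theorem monotone_x_sqrt_log :
    MonotoneOn (fun x : ℝ => x * Real.sqrt (Real.log (1 + 1 / x ^ 2))) (Set.Ici 0) ∧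
      Filter.Tendsto (fun x : ℝ => x * Real.sqrt (Real.log (1 + 1 / x ^ 2)))
        (nhdsWithin 0 (Set.Ioi 0)) (nhds 0) := by
  constructor
  · intro a ha b hb hab
    simp only [mul_sqrt_log_one_add_one_div_sq ha, mul_sqrt_log_one_add_one_div_sq hb]
    exact sqrt_le_sqrt <| monotoneOn_mul_log_one_add_inv (sq_nonneg a) (sq_nonneg b)
      (pow_le_pow_left₀ ha hab 2)
  · have hsq : Tendsto (fun x : ℝ => x ^ 2) (𝓝[>] 0) (𝓝[>] 0) :=
      tendsto_nhdsWithin_of_tendsto_nhds_of_eventually_within _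
        (((continuous_pow 2).tendsto' (0 : ℝ) 0 (zero_pow two_ne_zero)).mono_left
          nhdsWithin_le_nhds)
        (eventually_nhdsWithin_of_forall fun x (hx : 0 < x) => pow_pos hx 2)
    have hlim := (continuous_sqrt.tendsto' 0 0 sqrt_zero).comp
      (tendsto_mul_log_one_add_inv_nhdsGT_zero.comp hsq)
    refine hlim.congr' ?_
    filter_upwards [self_mem_nhdsWithin] with x (hx : 0 < x)
    exact (mul_sqrt_log_one_add_one_div_sq hx.le).symm
end

section
/- (Dispersion estimate for the Littlewood–Paley localized fractional propagator.) Let $\frac{2}{3} < \alpha < 1$ and let $\psi \in C^\infty_c((1/2, 2))$ be nonnegative. There is a constant $C > 0$, depending only on $\alpha$ and $\psi$, such that for every dyadic integer $N = 2^j$, $j \geq 1$, and every $t \in (-1,1) \setminus \{0\}$, the kernel $\kappa_N(x,t) := \sum_{k \in \mathbb{Z}} \psi(|k|/N) e^{i(kx - |k|^\alpha t)}$ satisfies $\|\kappa_N(\cdot, t)\|_{L^\infty(\mathbb{T})} \leq C |t|^{-1/2} N^{1 - \alpha/2}$. -/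
open Real Complex

set_option maxHeartbeats 1600000

/-- Telescoping over `Ico`. -/
lemma tele_Ico {E : Type*} [AddCommGroup E] (g : ℕ → E) (a m : ℕ) (h : a ≤ m) :
    ∑ n ∈ Finset.Ico a m, (g (n+1) - g n) = g m - g a := by
  rw [Finset.sum_Ico_eq_sum_range]
  calc ∑ k ∈ Finset.range (m - a), (g (a + k + 1) - g (a + k))
      = ∑ k ∈ Finset.range (m - a), ((fun i => g (a + i)) (k+1) - (fun i => g (a+i)) k) := by
        refine Finset.sum_congr rfl fun k _ => by simp [Nat.add_assoc]
    _ = g (a + (m - a)) - g (a + 0) := Finset.sum_range_sub (fun i => g (a + i)) (m - a)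
    _ = g m - g a := by rw [Nat.add_sub_cancel' h, Nat.add_zero]

/-- Abel summation identity. -/
lemma abel_id (c z : ℕ → ℂ) (a b : ℕ) (hab : a < b) :
    ∑ n ∈ Finset.Ico a b, c n * z n
      = c (b-1) * (∑ k ∈ Finset.Ico a b, z k)
        + ∑ n ∈ Finset.Ico a (b-1), (c n - c (n+1)) * (∑ k ∈ Finset.Ico a (n+1), z k) := by
  induction b with
  | zero => omega
  | succ b ih =>
    rcases Nat.lt_or_ge a b with hb | hb
    · rw [Finset.sum_Ico_succ_top hb.le, ih hb]
      have h1 : b + 1 - 1 = b := rfl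
      rw [h1]
      have hb1 : a ≤ b - 1 := by omega
      have hbb : b - 1 + 1 = b := by omega
      have hthis : b = (b-1) + 1 := by omega
      rw [Finset.sum_Ico_succ_top hb.le z]
      have hsplit : ∑ n ∈ Finset.Ico a b, (c n - c (n+1)) * ∑ k ∈ Finset.Ico a (n+1), z k
          = (∑ n ∈ Finset.Ico a (b-1), (c n - c (n+1)) * ∑ k ∈ Finset.Ico a (n+1), z k)
            + (c (b-1) - c b) * ∑ k ∈ Finset.Ico a b, z k := by
        conv_lhs => rw [hthis]
        rw [Finset.sum_Ico_succ_top hb1, hbb]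
      rw [hsplit]
      ring
    · have hab2 : a = b := by omega
      subst hab2
      simp [Finset.sum_Ico_eq_sum_range]


lemma winv (θ : ℝ) (hs : Real.sin (θ/2) ≠ 0) :
    (-(1/2 : ℂ) - (Complex.I/2) * ((Real.cos (θ/2) / Real.sin (θ/2) : ℝ) : ℂ))
      * (Complex.exp (Complex.I * θ) - 1) = 1 := by
  have hcos : Real.cos θ = Real.cos (θ/2)^2 - Real.sin (θ/2)^2 := by
    nth_rewrite 1 [show θ = 2 * (θ/2) by ring]
    rw [Real.cos_two_mul]
    nlinarith [Real.sin_sq_add_cos_sq (θ/2)]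
  have hsin : Real.sin θ = 2 * Real.sin (θ/2) * Real.cos (θ/2) := by
    nth_rewrite 1 [show θ = 2 * (θ/2) by ring]
    rw [Real.sin_two_mul]
  set S : ℂ := (Real.sin (θ/2) : ℂ) with hSdef
  set C : ℂ := (Real.cos (θ/2) : ℂ) with hCdef
  have hE : Complex.exp (Complex.I * θ) = (C^2 - S^2) + (2*S*C) * Complex.I := by
    rw [mul_comm, Complex.exp_mul_I, ← Complex.ofReal_cos, ← Complex.ofReal_sin, hcos, hsin]
    simp only [Complex.ofReal_sub, Complex.ofReal_mul, Complex.ofReal_pow,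
      Complex.ofReal_ofNat, ← hSdef, ← hCdef]
  have hS : S ≠ 0 := Complex.ofReal_ne_zero.mpr hs
  have hpy : S^2 + C^2 = 1 := by
    rw [hSdef, hCdef]
    exact_mod_cast congrArg (Complex.ofReal ·) (Real.sin_sq_add_cos_sq (θ/2))
  rw [Complex.ofReal_div, ← hSdef, ← hCdef, hE]
  have h0 : (-(1/2 : ℂ) - (Complex.I/2) * (C/S)) = (-S - Complex.I * C) / (2*S) := by
    field_simp
  rw [h0, div_mul_eq_mul_div, div_eq_one_iff_eq (by simp [hS])]
  linear_combination (S - Complex.I*C) * hpy + (-2*S*C^2) * Complex.I_sq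


lemma sin_lb_aux {u : ℝ} (h1 : 0 < u) (h2 : u ≤ 1/2) : u/2 ≤ Real.sin u := by
  have h := Real.sin_gt_sub_cube h1
  have h3 : u^3 ≤ u * (1/4) := by nlinarith [sq_nonneg u]
  nlinarith

lemma sin_half_ge {δ θ : ℝ} (hδ0 : 0 < δ) (hδ1 : δ ≤ 1) (h1 : δ ≤ θ) (h2 : θ ≤ 2*π - δ) :
    δ/4 ≤ Real.sin (θ/2) := by
  have hπ := Real.pi_gt_three
  have hsd : δ/4 ≤ Real.sin (δ/2) := by
    have := sin_lb_aux (u := δ/2) (by linarith) (by linarith)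
    linarith
  have hmono := Real.strictMonoOn_sin.monotoneOn
  rcases le_or_gt (θ/2) (π/2) with hc | hc
  · have h := hmono (by constructor <;> [linarith; linarith] : δ/2 ∈ Set.Icc (-(π/2)) (π/2))
      (by constructor <;> [linarith; linarith] : θ/2 ∈ Set.Icc (-(π/2)) (π/2)) (by linarith)
    linarith
  · rw [← Real.sin_pi_sub]
    have h := hmono (by constructor <;> [linarith; linarith] : δ/2 ∈ Set.Icc (-(π/2)) (π/2))
      (by constructor <;> [linarith; linarith] : (π - θ/2) ∈ Set.Icc (-(π/2)) (π/2)) (by linarith)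
    linarith

lemma cot_anti {δ θ1 θ2 : ℝ} (hδ0 : 0 < δ) (hδ1 : δ ≤ 1) (h1 : δ ≤ θ1) (h12 : θ1 ≤ θ2)
    (h2 : θ2 ≤ 2*π - δ) :
    Real.cos (θ2/2) / Real.sin (θ2/2) ≤ Real.cos (θ1/2) / Real.sin (θ1/2) := by
  have hπ := Real.pi_gt_three
  have hs1 : δ/4 ≤ Real.sin (θ1/2) := sin_half_ge hδ0 hδ1 h1 (by linarith)
  have hs2 : δ/4 ≤ Real.sin (θ2/2) := sin_half_ge hδ0 hδ1 (by linarith) h2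
  have hs1' : 0 < Real.sin (θ1/2) := by linarith
  have hs2' : 0 < Real.sin (θ2/2) := by linarith
  rw [div_le_div_iff₀ hs2' hs1']
  have hnum : Real.cos (θ1/2) * Real.sin (θ2/2) - Real.cos (θ2/2) * Real.sin (θ1/2)
      = Real.sin (θ2/2 - θ1/2) := by rw [Real.sin_sub]; ring
  have hge : 0 ≤ Real.sin (θ2/2 - θ1/2) := by
    apply Real.sin_nonneg_of_nonneg_of_le_pi <;> linarith
  linarith

lemma cot_abs_le {δ θ : ℝ} (hδ0 : 0 < δ) (hδ1 : δ ≤ 1) (h1 : δ ≤ θ) (h2 : θ ≤ 2*π - δ) :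
    |Real.cos (θ/2) / Real.sin (θ/2)| ≤ 4/δ := by
  have hs : δ/4 ≤ Real.sin (θ/2) := sin_half_ge hδ0 hδ1 h1 h2
  have hs' : 0 < Real.sin (θ/2) := by linarith
  rw [abs_div, abs_of_pos hs', div_le_div_iff₀ hs' hδ0]
  have := Real.abs_cos_le_one (θ/2)
  nlinarith


lemma kl_core (f : ℕ → ℝ) (a b : ℕ) (δ : ℝ) (hδ0 : 0 < δ) (hδ1 : δ ≤ 1)
    (hrange : ∀ n, a ≤ n → n + 1 < b → δ ≤ f (n+1) - f n ∧ f (n+1) - f n ≤ 2*π - δ)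
    (hmono : ∀ n, a ≤ n → n + 2 < b → f (n+1) - f n ≤ f (n+2) - f (n+1)) :
    ‖∑ n ∈ Finset.Ico a b, Complex.exp (Complex.I * (f n : ℂ))‖ ≤ 17/δ := by
  have hδinv : 1 ≤ 1/δ := by rw [le_div_iff₀ hδ0]; linarith
  set z : ℕ → ℂ := fun n => Complex.exp (Complex.I * (f n : ℂ)) with hz
  have hz1 : ∀ m, ‖z m‖ = 1 := by
    intro m; rw [hz]; simp [Complex.norm_exp]
  rcases le_or_gt b (a+1) with hb | hb
  · -- at most one term
    have hcard : (Finset.Ico a b).card ≤ 1 := by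
      rw [Nat.card_Ico]; omega
    calc ‖∑ n ∈ Finset.Ico a b, z n‖ ≤ ∑ n ∈ Finset.Ico a b, ‖z n‖ := norm_sum_le _ _
      _ = ∑ n ∈ Finset.Ico a b, 1 := Finset.sum_congr rfl fun n _ => hz1 n
      _ = ((Finset.Ico a b).card : ℝ) := by simp
      _ ≤ 1 := by exact_mod_cast hcard
      _ ≤ 17/δ := by rw [le_div_iff₀ hδ0]; linarith
  · -- main case
    set b' := b - 1 with hb'
    have hbb : b = b' + 1 := by omega
    have hab' : a < b' := by omega
    set θ : ℕ → ℝ := fun n => f (n+1) - f n with hθdef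
    set γ : ℕ → ℝ := fun n => Real.cos (θ n/2) / Real.sin (θ n/2) with hγdef
    set w : ℕ → ℂ := fun n => -(1/2 : ℂ) - (Complex.I/2) * ((γ n : ℝ) : ℂ) with hw
    have hsin : ∀ n, a ≤ n → n + 1 < b → δ/4 ≤ Real.sin (θ n / 2) := fun n h1 h2 =>
      sin_half_ge hδ0 hδ1 (hrange n h1 h2).1 (hrange n h1 h2).2
    have hwz : ∀ n, a ≤ n → n + 1 < b → z n = w n * (z (n+1) - z n) := by
      intro n h1 h2
      have hsn : Real.sin (θ n / 2) ≠ 0 :=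
        (lt_of_lt_of_le (by positivity) (hsin n h1 h2)).ne'
      have hzz : z (n+1) = z n * Complex.exp (Complex.I * (θ n : ℂ)) := by
        rw [hz]
        simp only
        rw [← Complex.exp_add]
        congr 1
        have hc : ((f (n+1) : ℂ)) = (f n : ℂ) + ((θ n : ℝ) : ℂ) := by
          rw [hθdef]; push_cast; ring
        rw [hc]; ring
      have hwi := winv (θ n) hsn
      calc z n = z n * ((-(1/2 : ℂ) - (Complex.I/2) * ((Real.cos (θ n/2) / Real.sin (θ n/2) : ℝ) : ℂ))
          * (Complex.exp (Complex.I * (θ n : ℂ)) - 1)) := by rw [hwi]; ring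
        _ = w n * (z (n+1) - z n) := by rw [hzz, hw, hγdef]; ring
    have hwnorm : ∀ n, a ≤ n → n + 1 < b → ‖w n‖ ≤ 3/δ := by
      intro n h1 h2
      have hc := cot_abs_le hδ0 hδ1 (hrange n h1 h2).1 (hrange n h1 h2).2
      have e1 : (2:ℝ)/δ = 2*(1/δ) := by ring
      have e2 : (3:ℝ)/δ = 3*(1/δ) := by ring
      have e3 : (4:ℝ)/δ = 4*(1/δ) := by ring
      calc ‖w n‖ ≤ ‖-(1/2 : ℂ)‖ + ‖(Complex.I/2) * ((γ n : ℝ) : ℂ)‖ := norm_sub_le _ _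
        _ = 1/2 + |γ n|/2 := by
            rw [norm_neg, norm_mul, Complex.norm_real]
            norm_num [Real.norm_eq_abs]
            ring
        _ ≤ 3/δ := by
            rw [hγdef] at *
            rw [e2]; rw [e3] at hc
            have := abs_nonneg (Real.cos (θ n/2) / Real.sin (θ n/2))
            linarith
    -- decompose
    have hd : ∀ n, a ≤ n → n < b' → z n = w n * ((fun k => z (k+1) - z k) n) := by
      intro n h1 h2
      exact hwz n h1 (by omega)
    have hsum1 : ∑ n ∈ Finset.Ico a b', z n
        = ∑ n ∈ Finset.Ico a b', w n * (z (n+1) - z n) := by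
      refine Finset.sum_congr rfl fun n hn => ?_
      have := Finset.mem_Ico.mp hn
      exact hwz n this.1 (by omega)
    have habel := abel_id w (fun n => z (n+1) - z n) a b' hab'
    have htel1 : ∑ k ∈ Finset.Ico a b', (z (k+1) - z k) = z b' - z a := tele_Ico z a b' hab'.le
    have htel2 : ∀ m, a ≤ m → ∑ k ∈ Finset.Ico a m, (z (k+1) - z k) = z m - z a := fun m hm =>
      tele_Ico z a m hm
    -- bound the variation terms
    have hγmono : ∀ n, a ≤ n → n + 1 < b' → γ (n+1) ≤ γ n := by
      intro n h1 h2
      have r1 := hrange n h1 (by omega)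
      have r2 := hrange (n+1) (by omega) (by omega)
      have hm := hmono n h1 (by omega)
      exact cot_anti hδ0 hδ1 r1.1 hm r2.2
    have hγbound : ∀ n, a ≤ n → n + 1 < b → |γ n| ≤ 4/δ := by
      intro n h1 h2
      exact cot_abs_le hδ0 hδ1 (hrange n h1 h2).1 (hrange n h1 h2).2
    have hvar : ∑ n ∈ Finset.Ico a (b'-1), ‖(w n - w (n+1)) * (∑ k ∈ Finset.Ico a (n+1), (z (k+1) - z k))‖
        ≤ 8/δ := by
      have hstep : ∀ n ∈ Finset.Ico a (b'-1),
          ‖(w n - w (n+1)) * (∑ k ∈ Finset.Ico a (n+1), (z (k+1) - z k))‖ ≤ γ n - γ (n+1) := by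
        intro n hn
        have hmem := Finset.mem_Ico.mp hn
        have hle : γ (n+1) ≤ γ n := hγmono n hmem.1 (by omega)
        have hwdiff : w n - w (n+1) = (Complex.I/2) * (((γ (n+1) : ℝ) : ℂ) - ((γ n : ℝ) : ℂ)) := by
          rw [hw]; ring
        rw [htel2 (n+1) (by omega), hwdiff]
        rw [norm_mul, norm_mul]
        have h1 : ‖(Complex.I/2 : ℂ)‖ = 1/2 := by simp
        have h2 : ‖(((γ (n+1) : ℝ) : ℂ) - ((γ n : ℝ) : ℂ))‖ = γ n - γ (n+1) := by
          rw [← Complex.ofReal_sub, Complex.norm_real, Real.norm_eq_abs,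
            abs_of_nonpos (by linarith), neg_sub]
        have h3 : ‖z (n+1) - z a‖ ≤ 2 := by
          refine (norm_sub_le _ _).trans ?_
          rw [hz1, hz1]; norm_num
        rw [h1, h2]
        calc (1/2) * (γ n - γ (n+1)) * ‖z (n+1) - z a‖ ≤ (1/2) * (γ n - γ (n+1)) * 2 := by
              have : (0:ℝ) ≤ (1/2) * (γ n - γ (n+1)) := by linarith
              exact mul_le_mul_of_nonneg_left h3 this
          _ = γ n - γ (n+1) := by ring
      calc ∑ n ∈ Finset.Ico a (b'-1), ‖(w n - w (n+1)) * (∑ k ∈ Finset.Ico a (n+1), (z (k+1) - z k))‖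
          ≤ ∑ n ∈ Finset.Ico a (b'-1), (γ n - γ (n+1)) := Finset.sum_le_sum hstep
        _ = γ a - γ (b'-1) := by
            have := tele_Ico γ a (b'-1) (by omega)
            have h := congrArg (fun x => -x) this
            simp only [← Finset.sum_neg_distrib, neg_sub] at h
            convert h using 2 <;> ring
        _ ≤ 8/δ := by
            have g1 := hγbound a le_rfl (by omega)
            have g2 := hγbound (b'-1) (by omega) (by omega)
            have e : (8:ℝ)/δ = 4/δ + 4/δ := by ring
            rw [e]
            have := abs_le.mp g1
            have := abs_le.mp g2
            linarith [abs_le.mp g1, abs_le.mp g2]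
    -- final assembly
    have hwb : ‖w (b'-1)‖ ≤ 3/δ := hwnorm (b'-1) (by omega) (by omega)
    have hzba : ‖z b' - z a‖ ≤ 2 := by
      refine (norm_sub_le _ _).trans ?_
      rw [hz1, hz1]; norm_num
    have hmain : ‖∑ n ∈ Finset.Ico a b', z n‖ ≤ 14/δ := by
      rw [hsum1, habel, htel1]
      calc ‖w (b'-1) * (z b' - z a) + ∑ n ∈ Finset.Ico a (b'-1), (w n - w (n+1)) * (∑ k ∈ Finset.Ico a (n+1), (z (k+1) - z k))‖
          ≤ ‖w (b'-1) * (z b' - z a)‖ + ‖∑ n ∈ Finset.Ico a (b'-1), (w n - w (n+1)) * (∑ k ∈ Finset.Ico a (n+1), (z (k+1) - z k))‖ := norm_add_le _ _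
        _ ≤ ‖w (b'-1)‖ * ‖z b' - z a‖ + ∑ n ∈ Finset.Ico a (b'-1), ‖(w n - w (n+1)) * (∑ k ∈ Finset.Ico a (n+1), (z (k+1) - z k))‖ := by
            rw [norm_mul]
            exact add_le_add le_rfl (norm_sum_le _ _)
        _ ≤ (3/δ) * 2 + 8/δ := by
            refine add_le_add ?_ hvar
            have h0 : (0:ℝ) ≤ ‖z b' - z a‖ := norm_nonneg _
            calc ‖w (b'-1)‖ * ‖z b' - z a‖ ≤ (3/δ) * ‖z b' - z a‖ :=
                  mul_le_mul_of_nonneg_right hwb h0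
              _ ≤ (3/δ) * 2 := by
                  refine mul_le_mul_of_nonneg_left hzba (by positivity)
        _ = 14/δ := by ring
    calc ‖∑ n ∈ Finset.Ico a b, z n‖ = ‖(∑ n ∈ Finset.Ico a b', z n) + z b'‖ := by
          rw [hbb, Finset.sum_Ico_succ_top (by omega)]
      _ ≤ ‖∑ n ∈ Finset.Ico a b', z n‖ + ‖z b'‖ := norm_add_le _ _
      _ ≤ 14/δ + 1 := by rw [hz1]; exact add_le_add hmain le_rfl
      _ ≤ 17/δ := by
          have e : (17:ℝ)/δ = 14/δ + 3*(1/δ) := by ring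
          rw [e]; linarith


section Dfacts
variable {α : ℝ} (hα0 : 0 < α) (hα1 : α < 1)

lemma rpow_contOn (p : ℝ) {s t : ℝ} (hs : 0 < s) :
    ContinuousOn (fun y : ℝ => y ^ p) (Set.Icc s t) := by
  intro y hy
  exact (Real.continuousAt_rpow_const y p
    (Or.inl (ne_of_gt (lt_of_lt_of_le hs hy.1)))).continuousWithinAt

include hα0 hα1 in
lemma D_pos {y : ℝ} (hy : 1 ≤ y) : 0 < (y+1)^α - y^α := by
  have := Real.rpow_lt_rpow (by linarith : (0:ℝ) ≤ y) (by linarith : y < y + 1) hα0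
  linarith

include hα0 hα1 in
lemma D_le {y : ℝ} (hy : 1 ≤ y) : (y+1)^α - y^α ≤ α := by
  obtain ⟨c, hc, hceq⟩ := exists_hasDerivAt_eq_slope (fun s : ℝ => s ^ α)
    (fun s => α * s ^ (α-1)) (by linarith : y < y + 1)
    (rpow_contOn α (by linarith : (0:ℝ) < y))
    (fun s hs => Real.hasDerivAt_rpow_const (Or.inl (by rcases hs with ⟨h1, _⟩; nlinarith)))
  have hc1 : 1 ≤ c := by rcases hc with ⟨h1, _⟩; linarith
  have hle : c ^ (α - 1) ≤ 1 :=
    Real.rpow_le_one_of_one_le_of_nonpos hc1 (by linarith)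
  have : ((y+1)^α - y^α) / (y + 1 - y) = α * c ^ (α-1) := hceq.symm
  rw [show y + 1 - y = 1 by ring, div_one] at this
  rw [this]
  nlinarith

include hα0 hα1 in
lemma D_gap {y : ℝ} (hy : 1 ≤ y) :
    α*(1-α)*(y+2)^(α-2) ≤ ((y+1)^α - y^α) - ((y+2)^α - (y+1)^α) := by
  -- first MVT on G s = (s+1)^α - s^α over [y, y+1]
  obtain ⟨ξ, hξ, hξeq⟩ := exists_hasDerivAt_eq_slope (fun s : ℝ => (s+1) ^ α - s ^ α)
    (fun s => α * (s+1) ^ (α-1) - α * s ^ (α-1)) (by linarith : y < y + 1)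
    (by
      apply ContinuousOn.sub
      · have : ContinuousOn (fun u : ℝ => u ^ α) (Set.Icc (y+1) (y+2)) :=
          rpow_contOn α (by linarith : (0:ℝ) < y + 1)
        apply this.comp (Continuous.continuousOn (by continuity))
        intro s hs
        exact ⟨by simp; linarith [hs.1], by simp; linarith [hs.2]⟩
      · exact rpow_contOn α (by linarith : (0:ℝ) < y))
    (fun s hs => by
      have h1 : HasDerivAt (fun u : ℝ => u + 1) 1 s := (hasDerivAt_id s).add_const 1
      have h2 : HasDerivAt (fun u : ℝ => u ^ α) (α * (s+1) ^ (α-1)) (s+1) :=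
        Real.hasDerivAt_rpow_const (Or.inl (by rcases hs with ⟨ha, _⟩; nlinarith))
      have h3 := h2.comp s h1
      simp only [mul_one] at h3
      exact h3.sub (Real.hasDerivAt_rpow_const (Or.inl (by rcases hs with ⟨ha, _⟩; nlinarith))))
  rw [show (y:ℝ) + 1 + 1 = y + 2 from by ring] at hξeq
  -- second MVT on s^ (α-1) over [ξ, ξ+1]
  obtain ⟨η, hη, hηeq⟩ := exists_hasDerivAt_eq_slope (fun s : ℝ => s ^ (α-1))
    (fun s => (α-1) * s ^ (α-2)) (by linarith [hξ.1] : ξ < ξ + 1)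
    (rpow_contOn (α-1) (by linarith [hξ.1] : (0:ℝ) < ξ))
    (fun s hs => by
      have hspos : (0:ℝ) < s := by rcases hs with ⟨ha, _⟩; linarith [hξ.1]
      have h := Real.hasDerivAt_rpow_const (x := s) (p := α - 1) (Or.inl hspos.ne')
      rw [show α - 1 - 1 = α - 2 from by ring] at h
      exact h)
  have hξ1 : 1 < ξ := by linarith [hξ.1]
  have hη1 : 1 < η := by linarith [hη.1]
  have hηy2 : η ≤ y + 2 := by linarith [hη.2, hξ.2]
  -- assemble
  have e1 : ((y+2)^α - (y+1)^α) - ((y+1)^α - y^α)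
      = (α * (ξ+1) ^ (α-1) - α * ξ ^ (α-1)) * 1 := by
    have := hξeq
    rw [show y + 1 - y = 1 by ring, div_one] at this
    rw [← this]; ring
  have e2 : (ξ+1) ^ (α-1) - ξ ^ (α-1) = (α-1) * η ^ (α-2) := by
    have := hηeq
    rw [show ξ + 1 - ξ = 1 by ring, div_one] at this
    rw [← this]
  have e3 : (y+2) ^ (α-2) ≤ η ^ (α-2) :=
    Real.rpow_le_rpow_of_nonpos (by linarith) hηy2 (by linarith)
  have hαpos : 0 < α * (1 - α) := by nlinarith
  calc α*(1-α)*(y+2)^(α-2) ≤ α*(1-α)*η^(α-2) := by nlinarith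
    _ = ((y+1)^α - y^α) - ((y+2)^α - (y+1)^α) := by nlinarith [e1, e2]
end Dfacts


lemma half_sum_bound {α : ℝ} (hα0 : 0 < α) (hα1 : α < 1)
    (ψ : ℝ → ℝ) (L : ℝ) (hL0 : 0 ≤ L)
    (hLip : ∀ u v : ℝ, |ψ u - ψ v| ≤ L * |u - v|) (hψ2 : ψ 2 = 0)
    (N : ℕ) (hN : 2 ≤ N) (t : ℝ) (ht0 : 0 < t) (ht1 : t < 1) (x : ℝ) :
    ‖∑ n ∈ Finset.Ico 1 (2*N+1),
        ((ψ ((n:ℝ) / N) : ℝ) : ℂ) *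
          Complex.exp (Complex.I * ((n : ℂ) * x - (((n:ℝ) ^ α : ℝ) : ℂ) * t))‖ ≤
      76 * L / Real.sqrt (α*(1-α)*t*((2*(N:ℝ)+2))^(α-2)) := by
  have hπ := Real.pi_gt_three
  -- reduce x modulo 2π
  set m : ℤ := round (x / (2*π)) with hm
  set x' : ℝ := x - 2*π*m with hx'
  have hx'le : |x'| ≤ π := by
    have h := abs_sub_round (x / (2*π))
    have h2π : (0:ℝ) < 2*π := by linarith
    have hxe : x' = 2*π*(x/(2*π) - m) := by rw [hx']; field_simp
    rw [hxe, abs_mul, abs_of_pos h2π]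
    calc 2*π * |x/(2*π) - m| ≤ 2*π * (1/2) := by
          apply mul_le_mul_of_nonneg_left h (by linarith)
      _ = π := by ring
  -- the phase function
  set f : ℕ → ℝ := fun n => n * x' - (n:ℝ)^α * t with hf
  set z : ℕ → ℂ := fun n => Complex.exp (Complex.I * (f n : ℂ)) with hz
  have hz1 : ∀ n, ‖z n‖ = 1 := by intro n; rw [hz]; simp [Complex.norm_exp]
  have hzo : ∀ n : ℕ, Complex.exp (Complex.I * ((n : ℂ) * x - (((n:ℝ) ^ α : ℝ) : ℂ) * t)) = z n := by
    intro n
    have e1 : ((n : ℂ) * x - (((n:ℝ) ^ α : ℝ) : ℂ) * t) = ((n * x - (n:ℝ)^α * t : ℝ) : ℂ) := by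
      push_cast; ring
    have e2 : (n * x - (n:ℝ)^α * t : ℝ) = f n + ((n*m : ℤ) : ℝ) * (2*π) := by
      rw [hf]; push_cast [hx']; ring
    rw [e1, e2, hz]
    push_cast
    rw [mul_add, Complex.exp_add]
    have e3 : Complex.I * ((n:ℂ) * (m:ℂ) * (2*(π:ℂ))) = ((n*m : ℤ) : ℂ) * (2*(π:ℂ)*Complex.I) := by
      push_cast; ring
    rw [e3, Complex.exp_int_mul_two_pi_mul_I, mul_one]
  -- increments
  set θ : ℕ → ℝ := fun n => x' - t * (((n:ℝ)+1)^α - (n:ℝ)^α) with hθ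
  have hθf : ∀ n : ℕ, f (n+1) - f n = θ n := by
    intro n; rw [hf, hθ]; push_cast; ring
  set lam : ℝ := α*(1-α)*t*((2*(N:ℝ)+2))^(α-2) with hlam
  have hbase : (1:ℝ) ≤ 2*(N:ℝ)+2 := by
    have : (0:ℝ) ≤ (N:ℝ) := Nat.cast_nonneg N
    linarith
  have hlam0 : 0 < lam := by
    rw [hlam]
    have h3 := Real.rpow_pos_of_pos (by linarith : (0:ℝ) < 2*(N:ℝ)+2) (α-2)
    have hα' : 0 < α*(1-α) := mul_pos hα0 (by linarith)
    nlinarith [mul_pos (mul_pos hα' ht0) h3]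
  have hlam4 : lam ≤ 1/4 := by
    rw [hlam]
    have h1 : ((2*(N:ℝ)+2))^(α-2) ≤ 1 :=
      Real.rpow_le_one_of_one_le_of_nonpos hbase (by linarith)
    have h2 : α*(1-α) ≤ 1/4 := by nlinarith [sq_nonneg (α - 1/2)]
    have h3 : (0:ℝ) < ((2*(N:ℝ)+2))^(α-2) :=
      Real.rpow_pos_of_pos (by linarith) _
    have hA : 0 < α*(1-α) := mul_pos hα0 (by linarith)
    have s1 : α*(1-α)*t ≤ 1/4 := by nlinarith [mul_le_mul_of_nonneg_left ht1.le hA.le]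
    have s2 : α*(1-α)*t*((2*(N:ℝ)+2))^(α-2) ≤ α*(1-α)*t*1 :=
      mul_le_mul_of_nonneg_left h1 (mul_pos hA ht0).le
    nlinarith
  set δ : ℝ := Real.sqrt lam with hδ
  have hδ0 : 0 < δ := Real.sqrt_pos.mpr hlam0
  have hδsq : δ^2 = lam := Real.sq_sqrt hlam0.le
  have hδhalf : δ ≤ 1/2 := by
    rw [hδ]
    calc Real.sqrt lam ≤ Real.sqrt (1/4) := Real.sqrt_le_sqrt hlam4
      _ = 1/2 := by
          rw [show (1/4 : ℝ) = (1/2)^2 by ring, Real.sqrt_sq (by norm_num)]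
  -- step bound
  have hstep : ∀ n : ℕ, 1 ≤ n → n ≤ 2*N → lam ≤ θ (n+1) - θ n := by
    intro n h1 h2
    have hn1 : (1:ℝ) ≤ (n:ℝ) := by exact_mod_cast h1
    have hgap := D_gap hα0 hα1 hn1
    have hcast : ((n+1 : ℕ):ℝ) = (n:ℝ)+1 := by push_cast; ring
    have e : θ (n+1) - θ n
        = t * ((((n:ℝ)+1)^α - (n:ℝ)^α) - (((n:ℝ)+2)^α - ((n:ℝ)+1)^α)) := by
      rw [hθ]
      simp only [hcast]
      rw [show (n:ℝ)+1+1 = (n:ℝ)+2 from by ring]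
      ring
    rw [e, hlam]
    have hmono2 : ((2*(N:ℝ)+2))^(α-2) ≤ (((n:ℝ)+2))^(α-2) := by
      apply Real.rpow_le_rpow_of_nonpos (by linarith) ?_ (by linarith)
      have : (n:ℝ) ≤ 2*(N:ℝ) := by exact_mod_cast h2
      linarith
    have hαpos : 0 < α*(1-α) := mul_pos hα0 (by linarith)
    have c1 : α*(1-α)*((2*(N:ℝ)+2))^(α-2) ≤ α*(1-α)*(((n:ℝ)+2))^(α-2) :=
      mul_le_mul_of_nonneg_left hmono2 hαpos.le
    have c3 := mul_le_mul_of_nonneg_left (c1.trans hgap) ht0.le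
    nlinarith [c3]
  -- θ bounds
  have hθrange : ∀ n : ℕ, 1 ≤ n → x' - 1 < θ n ∧ θ n < x' := by
    intro n h1
    have hn1 : (1:ℝ) ≤ (n:ℝ) := by exact_mod_cast h1
    have hDpos := D_pos hα0 hα1 hn1
    have hDle := D_le hα0 hα1 hn1
    constructor
    · simp only [hθ]
      nlinarith [mul_le_mul ht1.le hDle hDpos.le (by linarith : (0:ℝ) ≤ 1)]
    · simp only [hθ]
      nlinarith [mul_pos ht0 hDpos]
  -- accumulated growth
  have hacc : ∀ p n : ℕ, 1 ≤ p → p ≤ n → n ≤ 2*N + 1 → lam * ((n:ℝ) - (p:ℝ)) ≤ θ n - θ p := by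
    intro p n hp hpn hn
    induction n with
    | zero => omega
    | succ k ih =>
      rcases Nat.lt_or_ge p (k+1) with hlt | hge
      · have hk : p ≤ k := by omega
        have hik := ih (by omega) (by omega)
        have hs := hstep k (by omega) (by omega)
        have : ((k+1 : ℕ):ℝ) = (k:ℝ)+1 := by push_cast; ring
        rw [this]
        have := hik
        nlinarith
      · have : p = k+1 := by omega
        subst this
        simp
  -- partial sum bound
  have hM : ∀ a b : ℕ, 1 ≤ a → b ≤ 2*N+1 → ‖∑ n ∈ Finset.Ico a b, z n‖ ≤ 38/δ := by
    intro a b ha hb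
    rcases le_or_gt b a with hba | hab
    · rw [Finset.Ico_eq_empty (by omega)]
      simp; positivity
    -- find the window
    have hPex : ∃ n, b ≤ n ∨ (a ≤ n ∧ -δ < θ n) := ⟨b, Or.inl le_rfl⟩
    set p := Nat.find hPex with hp
    have hpspec := Nat.find_spec hPex
    have hpmin : ∀ n, n < p → ¬(b ≤ n ∨ (a ≤ n ∧ -δ < θ n)) := fun n h => Nat.find_min hPex h
    have hpb : p ≤ b := Nat.find_le (Or.inl le_rfl)
    have hap : a ≤ p := by
      by_contra h
      push_neg at h
      rcases hpspec with h1 | h2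
      · omega
      · omega
    have hQex : ∃ n, b ≤ n ∨ (p ≤ n ∧ δ ≤ θ n) := ⟨b, Or.inl le_rfl⟩
    set q := Nat.find hQex with hq
    have hqspec := Nat.find_spec hQex
    have hqmin : ∀ n, n < q → ¬(b ≤ n ∨ (p ≤ n ∧ δ ≤ θ n)) := fun n h => Nat.find_min hQex h
    have hqb : q ≤ b := Nat.find_le (Or.inl le_rfl)
    have hpq : p ≤ q := by
      by_contra h
      push_neg at h
      rcases hqspec with h1 | h2
      · omega
      · omega
    -- properties on runs
    have hrun1 : ∀ n, a ≤ n → n < p → θ n ≤ -δ ∧ n < b := by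
      intro n h1 h2
      have h3 := hpmin n h2
      push_neg at h3
      exact ⟨h3.2 h1, by omega⟩
    have hrun2 : ∀ n, p ≤ n → n < q → θ n < δ ∧ n < b := by
      intro n h1 h2
      have h3 := hqmin n h2
      push_neg at h3
      exact ⟨h3.2 h1, by omega⟩
    have hx'bounds := abs_le.mp hx'le
    -- shifted increment identity
    have hshinc : ∀ n : ℕ, (f (n+1) + 2*π*((n+1:ℕ):ℝ)) - (f n + 2*π*(n:ℝ)) = θ n + 2*π := by
      intro n
      have := hθf n
      push_cast
      linarith
    -- run 1 : θ ≤ -δ, use shift by 2π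
    have hrun1bound : ‖∑ n ∈ Finset.Ico a p, z n‖ ≤ 17/δ := by
      have hzsh : ∀ n : ℕ, z n = Complex.exp (Complex.I * ((f n + 2*π*(n:ℝ) : ℝ) : ℂ)) := by
        intro n
        rw [hz]
        simp only
        push_cast
        rw [mul_add, Complex.exp_add]
        have e3 : Complex.I * (2*(π:ℂ)*(n:ℂ)) = ((n:ℤ) : ℂ) * (2*(π:ℂ)*Complex.I) := by
          push_cast; ring
        rw [e3, Complex.exp_int_mul_two_pi_mul_I, mul_one]
      have heq : ∑ n ∈ Finset.Ico a p, z n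
          = ∑ n ∈ Finset.Ico a p, Complex.exp (Complex.I * (((fun k => f k + 2*π*(k:ℝ)) n : ℝ) : ℂ)) :=
        Finset.sum_congr rfl fun n _ => hzsh n
      rw [heq]
      apply kl_core (fun k => f k + 2*π*(k:ℝ)) a p δ hδ0 (by linarith)
      · intro n h1 h2
        have e := hshinc n
        rw [e]
        have h5 := (hθrange n (by omega)).1
        have h6 := (hrun1 n h1 (by omega)).1
        constructor
        · linarith
        · linarith
      · intro n h1 h2
        have e1 := hshinc n
        have e2 := hshinc (n+1)
        rw [e1, e2]
        have hs := hstep n (by omega) (by omega)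
        linarith [hlam0]
    -- run 3 : θ ≥ δ
    have hrun3bound : ‖∑ n ∈ Finset.Ico q b, z n‖ ≤ 17/δ := by
      have heq : ∑ n ∈ Finset.Ico q b, z n
          = ∑ n ∈ Finset.Ico q b, Complex.exp (Complex.I * ((f n : ℝ) : ℂ)) :=
        Finset.sum_congr rfl fun n _ => by rw [hz]
      rw [heq]
      apply kl_core f q b δ hδ0 (by linarith)
      · intro n h1 h2
        rw [hθf n]
        have hqb' : q < b := by omega
        have hθq : δ ≤ θ q := by
          rcases hqspec with hh | hh
          · omega
          · exact hh.2
        have haccq := hacc q n (by omega) h1 (by omega)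
        have hnonneg : (0:ℝ) ≤ lam * ((n:ℝ) - (q:ℝ)) := by
          apply mul_nonneg hlam0.le
          have : (q:ℝ) ≤ (n:ℝ) := by exact_mod_cast h1
          linarith
        have h5 := (hθrange n (by omega)).2
        constructor
        · linarith
        · linarith
      · intro n h1 h2
        rw [hθf n, hθf (n+1)]
        have hs := hstep n (by omega) (by omega)
        linarith [hlam0]
    -- run 2 : the middle, at most 2/δ + 1 terms
    have hδinv : 2 ≤ 1/δ := by
      rw [le_div_iff₀ hδ0]; linarith
    have hrun2bound : ‖∑ n ∈ Finset.Ico p q, z n‖ ≤ 3/δ := by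
      have hcount : (q:ℝ) - (p:ℝ) ≤ 2/δ + 1 := by
        rcases le_or_gt q (p+1) with h | h
        · have : (q:ℝ) ≤ (p:ℝ) + 1 := by exact_mod_cast h
          have h0 : 0 < 2/δ := by positivity
          linarith
        · have hpθ : -δ < θ p := by
            rcases hpspec with hh | hh
            · omega
            · exact hh.2
          have hq1 : θ (q-1) < δ := (hrun2 (q-1) (by omega) (by omega)).1
          have haccp := hacc p (q-1) (by omega) (by omega) (by omega)
          have hcast : ((q-1:ℕ):ℝ) = (q:ℝ) - 1 := by
            rw [Nat.cast_sub (by omega : 1 ≤ q)]; simp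
          rw [hcast] at haccp
          have h2δ : lam * ((q:ℝ) - 1 - (p:ℝ)) < 2*δ := by linarith
          have hX : (q:ℝ) - 1 - (p:ℝ) < 2/δ := by
            rw [lt_div_iff₀ hδ0]
            have hq2 : 0 ≤ (q:ℝ) - 1 - (p:ℝ) := by
              have h6 : p + 1 ≤ q := h.le
              have : (p:ℝ) + 1 ≤ (q:ℝ) := by exact_mod_cast h6
              linarith
            nlinarith [hδsq]
          linarith
      calc ‖∑ n ∈ Finset.Ico p q, z n‖ ≤ ∑ n ∈ Finset.Ico p q, ‖z n‖ := norm_sum_le _ _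
        _ = ∑ n ∈ Finset.Ico p q, 1 := Finset.sum_congr rfl fun n _ => hz1 n
        _ = ((Finset.Ico p q).card : ℝ) := by simp
        _ = (q:ℝ) - (p:ℝ) := by
            rw [Nat.card_Ico, Nat.cast_sub hpq]
        _ ≤ 2/δ + 1 := hcount
        _ ≤ 3/δ := by
            have e : (3:ℝ)/δ = 2/δ + 1/δ := by ring
            rw [e]
            linarith
    -- combine the three runs
    have hsplit1 : ∑ n ∈ Finset.Ico a p, z n + ∑ n ∈ Finset.Ico p q, z n
        = ∑ n ∈ Finset.Ico a q, z n := Finset.sum_Ico_consecutive _ hap hpq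
    have hsplit2 : ∑ n ∈ Finset.Ico a q, z n + ∑ n ∈ Finset.Ico q b, z n
        = ∑ n ∈ Finset.Ico a b, z n := Finset.sum_Ico_consecutive _ (le_trans hap hpq) hqb
    calc ‖∑ n ∈ Finset.Ico a b, z n‖
        = ‖(∑ n ∈ Finset.Ico a p, z n + ∑ n ∈ Finset.Ico p q, z n) + ∑ n ∈ Finset.Ico q b, z n‖ := by
          rw [hsplit1, hsplit2]
      _ ≤ ‖∑ n ∈ Finset.Ico a p, z n + ∑ n ∈ Finset.Ico p q, z n‖ + ‖∑ n ∈ Finset.Ico q b, z n‖ :=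
          norm_add_le _ _
      _ ≤ (‖∑ n ∈ Finset.Ico a p, z n‖ + ‖∑ n ∈ Finset.Ico p q, z n‖) + ‖∑ n ∈ Finset.Ico q b, z n‖ := by
          gcongr
          exact norm_add_le _ _
      _ ≤ (17/δ + 3/δ) + 17/δ := by
          gcongr
      _ ≤ 38/δ := by
          have e : (38:ℝ)/δ = 17/δ + 3/δ + 17/δ + 1/δ := by ring
          rw [e]
          have : 0 < 1/δ := by positivity
          linarith
  -- Abel summation against the weight ψ
  set c : ℕ → ℂ := fun n => ((ψ ((n:ℝ) / N) : ℝ) : ℂ) with hc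
  have hrw : ∑ n ∈ Finset.Ico 1 (2*N+1),
      ((ψ ((n:ℝ) / N) : ℝ) : ℂ) * Complex.exp (Complex.I * ((n : ℂ) * x - (((n:ℝ) ^ α : ℝ) : ℂ) * t))
      = ∑ n ∈ Finset.Ico 1 (2*N+1), c n * z n :=
    Finset.sum_congr rfl fun n _ => by rw [hzo n]
  rw [hrw]
  have habel := abel_id c z 1 (2*N+1) (by omega)
  have hNR : (0:ℝ) < (N:ℝ) := by exact_mod_cast (by omega : 0 < N)
  have hc2N : c (2*N+1-1) = 0 := by
    have e : ((2*N : ℕ):ℝ) / (N:ℝ) = 2 := by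
      push_cast
      field_simp
    simp only [hc, show 2*N+1-1 = 2*N from rfl, e, hψ2]
    simp
  have hdiff : ∀ n : ℕ, ‖c n - c (n+1)‖ ≤ L / N := by
    intro n
    have e1 : ‖c n - c (n+1)‖ = |ψ ((n:ℝ)/N) - ψ (((n+1:ℕ):ℝ)/N)| := by
      rw [hc]
      simp only
      rw [← Complex.ofReal_sub, Complex.norm_real, Real.norm_eq_abs]
    rw [e1]
    have e2 : |(n:ℝ)/N - ((n+1:ℕ):ℝ)/N| = 1/N := by
      push_cast
      rw [show (n:ℝ)/N - ((n:ℝ)+1)/N = -(1/N) from by field_simp; ring, abs_neg,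
        abs_of_pos (by positivity)]
    calc |ψ ((n:ℝ)/N) - ψ (((n+1:ℕ):ℝ)/N)| ≤ L * |(n:ℝ)/N - ((n+1:ℕ):ℝ)/N| := hLip _ _
      _ = L * (1/N) := by rw [e2]
      _ = L / N := by ring
  rw [habel, hc2N, zero_mul, zero_add]
  have hterm : ∀ n ∈ Finset.Ico 1 (2*N+1-1),
      ‖(c n - c (n+1)) * (∑ k ∈ Finset.Ico 1 (n+1), z k)‖ ≤ (L/N) * (38/δ) := by
    intro n hn
    have hmem := Finset.mem_Ico.mp hn
    rw [norm_mul]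
    have h1 := hdiff n
    have h2 := hM 1 (n+1) le_rfl (by omega)
    have h3 : (0:ℝ) ≤ ‖∑ k ∈ Finset.Ico 1 (n+1), z k‖ := norm_nonneg _
    have h4 : (0:ℝ) ≤ L / N := by positivity
    calc ‖c n - c (n+1)‖ * ‖∑ k ∈ Finset.Ico 1 (n+1), z k‖
        ≤ (L/N) * ‖∑ k ∈ Finset.Ico 1 (n+1), z k‖ := mul_le_mul_of_nonneg_right h1 h3
      _ ≤ (L/N) * (38/δ) := mul_le_mul_of_nonneg_left h2 h4
  calc ‖∑ n ∈ Finset.Ico 1 (2*N+1-1), (c n - c (n+1)) * (∑ k ∈ Finset.Ico 1 (n+1), z k)‖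
      ≤ ∑ n ∈ Finset.Ico 1 (2*N+1-1), ‖(c n - c (n+1)) * (∑ k ∈ Finset.Ico 1 (n+1), z k)‖ :=
        norm_sum_le _ _
    _ ≤ ∑ n ∈ Finset.Ico 1 (2*N+1-1), (L/N) * (38/δ) := Finset.sum_le_sum hterm
    _ = ((2*N+1-1-1 : ℕ) : ℝ) * ((L/N) * (38/δ)) := by
        rw [Finset.sum_const, Nat.card_Ico, nsmul_eq_mul]
    _ ≤ 76 * L / δ := by
        have hcard : ((2*N+1-1-1 : ℕ) : ℝ) ≤ 2*(N:ℝ) := by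
          have h5 : (2*N+1-1-1 : ℕ) ≤ 2*N := by omega
          calc ((2*N+1-1-1 : ℕ) : ℝ) ≤ ((2*N : ℕ) : ℝ) := by exact_mod_cast h5
            _ = 2*(N:ℝ) := by push_cast; ring
        have h0 : (0:ℝ) ≤ (L/N) * (38/δ) := by positivity
        calc ((2*N+1-1-1 : ℕ) : ℝ) * ((L/N) * (38/δ)) ≤ 2*(N:ℝ) * ((L/N) * (38/δ)) :=
              mul_le_mul_of_nonneg_right hcard h0
          _ = 76 * L / δ := by field_simp; ring


lemma half_sum_bound' {α : ℝ} (hα0 : 0 < α) (hα1 : α < 1)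
    (ψ : ℝ → ℝ) (L : ℝ) (hL0 : 0 ≤ L)
    (hLip : ∀ u v : ℝ, |ψ u - ψ v| ≤ L * |u - v|) (hψ2 : ψ 2 = 0)
    (N : ℕ) (hN : 2 ≤ N) (t : ℝ) (ht0 : t ≠ 0) (ht1 : |t| < 1) (x : ℝ) :
    ‖∑ n ∈ Finset.Ico 1 (2*N+1),
        ((ψ ((n:ℝ) / N) : ℝ) : ℂ) *
          Complex.exp (Complex.I * ((n : ℂ) * x - (((n:ℝ) ^ α : ℝ) : ℂ) * t))‖ ≤
      76 * L / Real.sqrt (α*(1-α)* |t| *((2*(N:ℝ)+2))^(α-2)) := by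
  rcases lt_or_gt_of_ne ht0 with hneg | hpos
  · -- t < 0 : conjugate
    have habs : |t| = -t := abs_of_neg hneg
    rw [habs]
    have hconj : (starRingEnd ℂ) (∑ n ∈ Finset.Ico 1 (2*N+1),
        ((ψ ((n:ℝ) / N) : ℝ) : ℂ) *
          Complex.exp (Complex.I * ((n : ℂ) * x - (((n:ℝ) ^ α : ℝ) : ℂ) * t)))
        = ∑ n ∈ Finset.Ico 1 (2*N+1),
        ((ψ ((n:ℝ) / N) : ℝ) : ℂ) *
          Complex.exp (Complex.I * ((n : ℂ) * ((-x : ℝ) : ℂ) - (((n:ℝ) ^ α : ℝ) : ℂ) * ((-t : ℝ) : ℂ))) := by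
      rw [map_sum]
      refine Finset.sum_congr rfl fun n _ => ?_
      rw [map_mul, Complex.conj_ofReal, ← Complex.exp_conj]
      congr 1
      simp only [map_mul, map_sub, Complex.conj_I, Complex.conj_ofReal, map_natCast, map_neg]
      push_cast
      ring
    have hnorm : ‖∑ n ∈ Finset.Ico 1 (2*N+1),
        ((ψ ((n:ℝ) / N) : ℝ) : ℂ) *
          Complex.exp (Complex.I * ((n : ℂ) * x - (((n:ℝ) ^ α : ℝ) : ℂ) * t))‖
        = ‖∑ n ∈ Finset.Ico 1 (2*N+1),
        ((ψ ((n:ℝ) / N) : ℝ) : ℂ) *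
          Complex.exp (Complex.I * ((n : ℂ) * ((-x : ℝ) : ℂ) - (((n:ℝ) ^ α : ℝ) : ℂ) * ((-t : ℝ) : ℂ)))‖ := by
      rw [← hconj, RCLike.norm_conj]
    rw [hnorm]
    exact half_sum_bound hα0 hα1 ψ L hL0 hLip hψ2 N hN (-t) (by linarith)
      (by rw [habs] at ht1; linarith) (-x)
  · rw [abs_of_pos hpos]
    exact half_sum_bound hα0 hα1 ψ L hL0 hLip hψ2 N hN t hpos (by rw [abs_of_pos hpos] at ht1; exact ht1) x

lemma invsqrt_bound {α : ℝ} (hα0 : 0 < α) (hα1 : α < 1)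
    (N : ℕ) (hN : 2 ≤ N) (s : ℝ) (hs0 : 0 < s) :
    1/Real.sqrt (α*(1-α)*s*((2*(N:ℝ)+2))^(α-2)) ≤
      (4/Real.sqrt (α*(1-α))) * s^(-(1:ℝ)/2) * (N:ℝ)^(1-α/2) := by
  have hA : 0 < α*(1-α) := mul_pos hα0 (by linarith)
  have hNR : (2:ℝ) ≤ (N:ℝ) := by exact_mod_cast hN
  have hR0 : (0:ℝ) < 2*(N:ℝ)+2 := by linarith
  have hX0 : (0:ℝ) < ((2*(N:ℝ)+2))^(α-2) := Real.rpow_pos_of_pos hR0 _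
  -- factor the square root
  have hfact : Real.sqrt (α*(1-α)*s*((2*(N:ℝ)+2))^(α-2))
      = Real.sqrt (α*(1-α)) * Real.sqrt s * Real.sqrt (((2*(N:ℝ)+2))^(α-2)) := by
    rw [Real.sqrt_mul (by positivity), Real.sqrt_mul hA.le]
  rw [hfact]
  have h1 : 1/(Real.sqrt (α*(1-α)) * Real.sqrt s * Real.sqrt (((2*(N:ℝ)+2))^(α-2)))
      = (1/Real.sqrt (α*(1-α))) * s^(-(1:ℝ)/2) * (1/Real.sqrt (((2*(N:ℝ)+2))^(α-2))) := by
    rw [show -(1:ℝ)/2 = -(1/2) from by ring, Real.rpow_neg hs0.le, ← Real.sqrt_eq_rpow]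
    field_simp
  rw [h1]
  have h2 : 1/Real.sqrt (((2*(N:ℝ)+2))^(α-2)) = (2*(N:ℝ)+2)^((2-α)/2) := by
    rw [Real.sqrt_eq_rpow, ← Real.rpow_mul hR0.le, one_div, ← Real.rpow_neg hR0.le]
    congr 1
    ring
  rw [h2]
  have h3 : (2*(N:ℝ)+2)^((2-α)/2) ≤ 4 * (N:ℝ)^(1-α/2) := by
    have e1 : (2*(N:ℝ)+2)^((2-α)/2) ≤ (4*(N:ℝ))^((2-α)/2) :=
      Real.rpow_le_rpow hR0.le (by linarith) (by linarith)
    have e2 : (4*(N:ℝ))^((2-α)/2) = (4:ℝ)^((2-α)/2) * (N:ℝ)^((2-α)/2) :=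
      Real.mul_rpow (by norm_num) (by positivity)
    have e3 : (4:ℝ)^((2-α)/2) ≤ (4:ℝ)^(1:ℝ) :=
      Real.rpow_le_rpow_of_exponent_le (by norm_num) (by linarith)
    have e4 : (4:ℝ)^(1:ℝ) = 4 := Real.rpow_one 4
    have e5 : (N:ℝ)^((2-α)/2) = (N:ℝ)^(1-α/2) := by
      congr 1
      ring
    have e6 : (0:ℝ) ≤ (N:ℝ)^((2-α)/2) := by positivity
    calc (2*(N:ℝ)+2)^((2-α)/2) ≤ (4:ℝ)^((2-α)/2) * (N:ℝ)^((2-α)/2) := by rw [← e2]; exact e1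
      _ ≤ 4 * (N:ℝ)^((2-α)/2) := by
          exact mul_le_mul_of_nonneg_right (e3.trans (le_of_eq e4)) e6
      _ = 4 * (N:ℝ)^(1-α/2) := by rw [e5]
  calc (1/Real.sqrt (α*(1-α))) * s^(-(1:ℝ)/2) * ((2*(N:ℝ)+2)^((2-α)/2))
      ≤ (1/Real.sqrt (α*(1-α))) * s^(-(1:ℝ)/2) * (4 * (N:ℝ)^(1-α/2)) := by
        apply mul_le_mul_of_nonneg_left h3
        positivity
    _ = (4/Real.sqrt (α*(1-α))) * s^(-(1:ℝ)/2) * (N:ℝ)^(1-α/2) := by ring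


/-- Dispersion estimate for the Littlewood–Paley localized fractional propagator:
`‖κ_N(·,t)‖_{L^∞} ≤ C |t|^{-1/2} N^{1-α/2}` where
`κ_N(x,t) = ∑_k ψ(|k|/N) e^{i(kx - |k|^α t)}`. -/
theorem dispersion_estimate_kernel (α : ℝ) (hα : 2 / 3 < α) (hα1 : α < 1)
    (ψ : ℝ → ℝ) (hψsmooth : ContDiff ℝ (⊤ : ℕ∞) ψ) (hψpos : ∀ x, 0 ≤ ψ x)
    (hψsupp : Function.support ψ ⊆ Set.Ioo (1 / 2) 2) :
    ∃ C > 0, ∀ j : ℕ, 1 ≤ j → ∀ t : ℝ, t ∈ Set.Ioo (-1 : ℝ) 1 → t ≠ 0 → ∀ x : ℝ,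
      ‖∑' k : ℤ,
          ((ψ (|(k : ℝ)| / 2 ^ j) : ℝ) : ℂ) *
            Complex.exp (Complex.I * ((k : ℂ) * x - ((|(k : ℝ)| ^ α : ℝ) : ℂ) * t))‖ ≤
        C * |t| ^ (-(1 : ℝ) / 2) * ((2 : ℝ) ^ j) ^ (1 - α / 2) := by
  have hα0 : 0 < α := by linarith
  -- Lipschitz constant
  have hK : HasCompactSupport ψ := by
    apply HasCompactSupport.intro (isCompact_Icc (a := (1/2:ℝ)) (b := 2))
    intro u hu
    by_contra h
    exact hu (Set.Ioo_subset_Icc_self (hψsupp (Function.mem_support.mpr h)))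
  obtain ⟨C0, hC0⟩ := (hψsmooth.continuous_deriv (by simp)).bounded_above_of_compact_support hK.deriv
  set L : ℝ := max C0 0 with hLdef
  have hL0 : 0 ≤ L := le_max_right _ _
  have hLip : ∀ u v : ℝ, |ψ u - ψ v| ≤ L * |u - v| := by
    have hlw : LipschitzWith (Real.toNNReal L) ψ := by
      apply lipschitzWith_of_nnnorm_deriv_le (hψsmooth.differentiable (by simp))
      intro u
      rw [← NNReal.coe_le_coe, coe_nnnorm, Real.coe_toNNReal _ hL0]
      exact (hC0 u).trans (le_max_left _ _)
    intro u v
    have := hlw.dist_le_mul u v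
    rw [Real.dist_eq, Real.dist_eq, Real.coe_toNNReal _ hL0] at this
    exact this
  have hψ2 : ψ 2 = 0 := by
    by_contra h
    have := hψsupp (Function.mem_support.mpr h)
    exact lt_irrefl 2 this.2
  have hψ0 : ψ 0 = 0 := by
    by_contra h
    have := hψsupp (Function.mem_support.mpr h)
    linarith [this.1]
  -- constant
  have hA : 0 < α*(1-α) := mul_pos hα0 (by linarith)
  have hsA : 0 < Real.sqrt (α*(1-α)) := Real.sqrt_pos.mpr hA
  refine ⟨608 * (L+1) / Real.sqrt (α*(1-α)) + 1, ?_, ?_⟩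
  · have : 0 ≤ 608 * (L+1) / Real.sqrt (α*(1-α)) := by positivity
    linarith
  intro j hj t ht htne x
  set N : ℕ := 2^j with hNdef
  have hN : 2 ≤ N := by
    calc 2 = 2^1 := rfl
      _ ≤ 2^j := Nat.pow_le_pow_right (by norm_num) hj
  have hNpos : (0:ℝ) < (N:ℝ) := by
    have : 0 < N := by omega
    exact_mod_cast this
  have h2j : ((2:ℝ))^j = (N:ℝ) := by
    rw [hNdef]
    push_cast
    ring
  have htabs : |t| < 1 := abs_lt.mpr ⟨ht.1, ht.2⟩
  have htabs0 : 0 < |t| := abs_pos.mpr htne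
  -- reduce the tsum to two finite sums
  set g : ℤ → ℂ := fun k => ((ψ (|(k : ℝ)| / 2 ^ j) : ℝ) : ℂ) *
      Complex.exp (Complex.I * ((k : ℂ) * x - ((|(k : ℝ)| ^ α : ℝ) : ℂ) * t)) with hg
  set Spos : Finset ℤ := Finset.image (fun n : ℕ => (n:ℤ)) (Finset.Ico 1 (2*N+1)) with hSpos
  set Sneg : Finset ℤ := Finset.image (fun n : ℕ => -(n:ℤ)) (Finset.Ico 1 (2*N+1)) with hSneg
  have hgzero : ∀ k : ℤ, k ∉ Spos ∪ Sneg → g k = 0 := by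
    intro k hk
    have h1 : ¬(1 ≤ k ∧ k ≤ 2*N) := by
      intro ⟨ha, hb⟩
      apply hk
      apply Finset.mem_union_left
      rw [hSpos, Finset.mem_image]
      exact ⟨k.toNat, by rw [Finset.mem_Ico]; omega, by omega⟩
    have h2 : ¬(1 ≤ -k ∧ -k ≤ 2*N) := by
      intro ⟨ha, hb⟩
      apply hk
      apply Finset.mem_union_right
      rw [hSneg, Finset.mem_image]
      exact ⟨(-k).toNat, by rw [Finset.mem_Ico]; omega, by omega⟩
    have hψz : ψ (|(k : ℝ)| / 2 ^ j) = 0 := by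
      rcases eq_or_ne k 0 with hk0 | hk0
      · subst hk0
        simpa using hψ0
      · -- |k| ≥ 2N+1
        have hbig : (2*N+1 : ℤ) ≤ |k| := by
          rcases abs_cases k with ⟨he, _⟩ | ⟨he, _⟩ <;> omega
        by_contra h
        have hmem := hψsupp (Function.mem_support.mpr h)
        have hbigR : (2*(N:ℝ)+1) ≤ |(k:ℝ)| := by
          rw [← Int.cast_abs]
          exact_mod_cast hbig
        have : |(k : ℝ)| / 2 ^ j < 2 := hmem.2
        rw [h2j] at this
        have : |(k:ℝ)| < 2*(N:ℝ) := by
          rw [div_lt_iff₀ hNpos] at this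
          linarith
        linarith
    rw [hg]
    simp [hψz]
  have hsum : ∑' k : ℤ, g k = (∑ k ∈ Spos, g k) + ∑ k ∈ Sneg, g k := by
    rw [tsum_eq_sum hgzero]
    apply Finset.sum_union
    rw [Finset.disjoint_left]
    intro k hk1 hk2
    rw [hSpos, Finset.mem_image] at hk1
    rw [hSneg, Finset.mem_image] at hk2
    obtain ⟨n1, hn1, he1⟩ := hk1
    obtain ⟨n2, hn2, he2⟩ := hk2
    rw [Finset.mem_Ico] at hn1 hn2
    omega
  have hpossum : ∑ k ∈ Spos, g k = ∑ n ∈ Finset.Ico 1 (2*N+1),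
      ((ψ ((n:ℝ) / N) : ℝ) : ℂ) *
        Complex.exp (Complex.I * ((n : ℂ) * x - (((n:ℝ) ^ α : ℝ) : ℂ) * t)) := by
    rw [hSpos, Finset.sum_image (by intro a _ b _ h; simp only at h; exact_mod_cast h)]
    refine Finset.sum_congr rfl fun n hn => ?_
    rw [hg]
    have e1 : |((n:ℕ) : ℝ)| = (n:ℝ) := abs_of_nonneg (by positivity)
    simp only [Int.cast_natCast, e1, h2j]
  have hnegsum : ∑ k ∈ Sneg, g k = ∑ n ∈ Finset.Ico 1 (2*N+1),
      ((ψ ((n:ℝ) / N) : ℝ) : ℂ) *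
        Complex.exp (Complex.I * ((n : ℂ) * ((-x : ℝ) : ℂ) - (((n:ℝ) ^ α : ℝ) : ℂ) * t)) := by
    rw [hSneg, Finset.sum_image (by intro a _ b _ h; simp only at h; omega)]
    refine Finset.sum_congr rfl fun n hn => ?_
    rw [hg]
    have e1 : |((n:ℕ) : ℝ)| = (n:ℝ) := abs_of_nonneg (by positivity)
    simp only [Int.cast_neg, Int.cast_natCast, abs_neg, e1, h2j]
    congr 2
    push_cast
    ring
  -- apply the two half bounds
  have hhalf1 := half_sum_bound' hα0 hα1 ψ L hL0 hLip hψ2 N hN t htne htabs x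
  have hhalf2 := half_sum_bound' hα0 hα1 ψ L hL0 hLip hψ2 N hN t htne htabs (-x)
  have hinv := invsqrt_bound hα0 hα1 N hN |t| htabs0
  have hsqrtpos : 0 < Real.sqrt (α*(1-α) * |t| * ((2*(N:ℝ)+2))^(α-2)) := by
    apply Real.sqrt_pos.mpr
    have : (0:ℝ) < ((2*(N:ℝ)+2))^(α-2) := Real.rpow_pos_of_pos (by linarith) _
    positivity
  have hmulpos : (0:ℝ) ≤ |t| ^ (-(1:ℝ)/2) * (N:ℝ)^(1-α/2) := by positivity
  calc ‖∑' k : ℤ, g k‖ = ‖(∑ k ∈ Spos, g k) + ∑ k ∈ Sneg, g k‖ := by rw [hsum]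
    _ ≤ ‖∑ k ∈ Spos, g k‖ + ‖∑ k ∈ Sneg, g k‖ := norm_add_le _ _
    _ ≤ 76 * L / Real.sqrt (α*(1-α) * |t| * ((2*(N:ℝ)+2))^(α-2))
        + 76 * L / Real.sqrt (α*(1-α) * |t| * ((2*(N:ℝ)+2))^(α-2)) := by
        apply add_le_add
        · rw [hpossum]; exact hhalf1
        · rw [hnegsum]; exact hhalf2
    _ = (152 * L) * (1 / Real.sqrt (α*(1-α) * |t| * ((2*(N:ℝ)+2))^(α-2))) := by ring
    _ ≤ (152 * L) * ((4/Real.sqrt (α*(1-α))) * |t|^(-(1:ℝ)/2) * (N:ℝ)^(1-α/2)) := by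
        apply mul_le_mul_of_nonneg_left hinv (by positivity)
    _ = (608 * L / Real.sqrt (α*(1-α))) * (|t|^(-(1:ℝ)/2) * (N:ℝ)^(1-α/2)) := by ring
    _ ≤ (608 * (L+1) / Real.sqrt (α*(1-α)) + 1) * (|t|^(-(1:ℝ)/2) * (N:ℝ)^(1-α/2)) := by
        apply mul_le_mul_of_nonneg_right _ hmulpos
        have h1 : 608 * L / Real.sqrt (α*(1-α)) ≤ 608 * (L+1) / Real.sqrt (α*(1-α)) := by
          gcongr
          linarith
        linarith
    _ = (608 * (L+1) / Real.sqrt (α*(1-α)) + 1) * |t| ^ (-(1:ℝ)/2) * ((2:ℝ)^j) ^ (1-α/2) := by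
        rw [h2j]; ring
end

section
/- (Failure of a commutator estimate for $|D|$.) The inequality $\|u|D|\bar{u} - \bar{u}|D|u\|_{L^2} \leq C \|u\|_{H^{1/2}}\|u\|_{H^1}$ fails: for $u_N(x) = \frac{1}{\sqrt{\log N}} \sum_{n=1}^N \frac{e^{inx}}{n}$, the ratio $\|u_N |D|\overline{u_N} - \overline{u_N}|D|u_N\|_{L^2} / (\|u_N\|_{H^{1/2}}\|u_N\|_{H^1})$ is unbounded as $N \to \infty$. -/
/-!
On the Fourier side `‖u_N‖²_{H^s} = (log N)⁻¹ ∑_{n ≤ N} (1 + n²)^s / n²`, so comparing with the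
harmonic sum `H_N ≤ 1 + log N` gives `‖u_N‖²_{H^{1/2}} ≤ 4` and `‖u_N‖²_{H^1} ≤ 2N / log N`.
The coefficients are positive, and at a negative frequency `-m` the commutator coefficient is
`(log N)⁻¹ ∑_l m / (l (l + m))`; for `l ≤ K ≤ m` each term is at least `1 / (2l)`. Taking
`N = 4K`, each of the `K` frequencies `m ∈ [K, 2K)` thus carries a coefficient of size at least
`H_K / (2 log 4K) ≥ 1/4`, so the commutator has squared norm at least `K / 16`, whereas
`C² ‖u_N‖²_{H^{1/2}} ‖u_N‖²_{H^1} ≤ 512 C² K / (16 log 4K)` is smaller once `log 4K > 512 C²`.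
-/

open Real Complex

noncomputable section

/-- Fourier coefficients of `u_N = (log N)^{-1/2} ∑_{n=1}^N e^{inx}/n`. -/
def uCoeff (N : ℕ) (n : ℤ) : ℂ :=
  if 1 ≤ n ∧ n ≤ (N : ℤ) then 1 / ((Real.sqrt (Real.log N) : ℂ) * (n : ℂ)) else 0

/-- The `L²` norm of the commutator `u|D|ū - ū|D|u`, whose `k`-th Fourier
coefficient is `∑_l (|k-l| - |l|) û(l) conj û(l-k)`. -/
def commNorm (N : ℕ) : ℝ :=
  Real.sqrt (∑' k : ℤ,
    ‖∑' l : ℤ, (((|k - l| - |l| : ℤ) : ℝ) : ℂ) * uCoeff N l *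
        starRingEnd ℂ (uCoeff N (l - k))‖ ^ 2)

/-- The Sobolev norm `‖u_N‖_{H^s}`. -/
def sobNormSeq (s : ℝ) (N : ℕ) : ℝ :=
  Real.sqrt (∑' k : ℤ, (1 + |(k : ℝ)| ^ 2) ^ s * ‖uCoeff N k‖ ^ 2)

open Finset

theorem tsum_int_eq_sum_Icc {M : Type*} [AddCommMonoid M] [TopologicalSpace M] {N : ℕ}
    {f : ℤ → M} (hf : ∀ n : ℤ, n < 1 ∨ (N : ℤ) < n → f n = 0) :
    ∑' n, f n = ∑ i ∈ Icc 1 N, f i := by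
  rw [tsum_eq_sum (s := (Icc 1 N).map Nat.castEmbedding), sum_map]
  · rfl
  intro n hn
  refine hf n (by_contra fun h => hn (mem_map.2 ⟨n.toNat, ?_, ?_⟩)) <;> simp <;> omega

def uCoeffReal (N : ℕ) (n : ℤ) : ℝ :=
  if 1 ≤ n ∧ n ≤ (N : ℤ) then 1 / (√(Real.log N) * n) else 0

theorem uCoeff_eq_ofReal (N : ℕ) (n : ℤ) : uCoeff N n = uCoeffReal N n := by
  unfold uCoeff uCoeffReal
  split_ifs <;> push_cast <;> rfl

theorem uCoeff_eq_zero {N : ℕ} {n : ℤ} (h : n < 1 ∨ (N : ℤ) < n) : uCoeff N n = 0 :=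
  if_neg (by omega)

theorem uCoeffReal_natCast {N i : ℕ} (h1 : 1 ≤ i) (h2 : i ≤ N) :
    uCoeffReal N i = 1 / (√(Real.log N) * i) := by
  rw [uCoeffReal, if_pos (by omega)]
  push_cast
  rfl

theorem uCoeffReal_nonneg (N : ℕ) (n : ℤ) : 0 ≤ uCoeffReal N n := by
  unfold uCoeffReal
  split_ifs with h
  · have : (0 : ℝ) ≤ n := by exact_mod_cast (by omega : (0 : ℤ) ≤ n)
    positivity
  · rfl

theorem sobNormSeq_sq (s : ℝ) {N : ℕ} (hL : 0 < Real.log N) :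
    sobNormSeq s N ^ 2 = ∑ i ∈ Icc 1 N, (1 + (i : ℝ) ^ 2) ^ s / (Real.log N * i ^ 2) := by
  rw [sobNormSeq, sq_sqrt (tsum_nonneg fun _ => by positivity), tsum_int_eq_sum_Icc]
  · refine sum_congr rfl fun i hi => ?_
    rw [mem_Icc] at hi
    rw [uCoeff_eq_ofReal, norm_real, norm_eq_abs, uCoeffReal_natCast hi.1 hi.2]
    simp [mul_pow, sq_sqrt hL.le, div_eq_mul_inv]
  · intro n hn
    simp [uCoeff_eq_zero hn]

theorem sobNormSeq_half_sq_le {N : ℕ} (hL : 1 ≤ Real.log N) : sobNormSeq (1 / 2) N ^ 2 ≤ 4 := by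
  have hL₀ : 0 < Real.log N := by linarith
  rw [sobNormSeq_sq _ hL₀]
  calc ∑ i ∈ Icc 1 N, (1 + (i : ℝ) ^ 2) ^ (1 / 2 : ℝ) / (Real.log N * i ^ 2)
      ≤ ∑ i ∈ Icc 1 N, 2 / Real.log N * (i : ℝ)⁻¹ := sum_le_sum fun i hi => ?_
    _ = 2 / Real.log N * harmonic N := by simp [← mul_sum, harmonic_eq_sum_Icc]
    _ ≤ 2 / Real.log N * (1 + Real.log N) := by gcongr; exact harmonic_le_one_add_log N
    _ ≤ 4 := by rw [div_mul_eq_mul_div, div_le_iff₀ hL₀]; linarith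
  have hi : (1 : ℝ) ≤ i := by exact_mod_cast (mem_Icc.1 hi).1
  have hsqrt : (1 + (i : ℝ) ^ 2) ^ (1 / 2 : ℝ) ≤ 2 * i := by
    rw [← sqrt_eq_rpow, sqrt_le_iff]
    constructor <;> nlinarith
  calc (1 + (i : ℝ) ^ 2) ^ (1 / 2 : ℝ) / (Real.log N * i ^ 2) ≤ 2 * i / (Real.log N * i ^ 2) := by
        gcongr
    _ = 2 / Real.log N * (i : ℝ)⁻¹ := by field_simp

theorem sobNormSeq_one_sq_le {N : ℕ} (hL : 0 < Real.log N) :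
    sobNormSeq 1 N ^ 2 ≤ 2 * N / Real.log N := by
  rw [sobNormSeq_sq _ hL]
  calc ∑ i ∈ Icc 1 N, (1 + (i : ℝ) ^ 2) ^ (1 : ℝ) / (Real.log N * i ^ 2)
      ≤ ∑ _i ∈ Icc 1 N, 2 / Real.log N := sum_le_sum fun i hi => ?_
    _ = 2 * N / Real.log N := by simp; ring
  have hi : (1 : ℝ) ≤ i := by exact_mod_cast (mem_Icc.1 hi).1
  rw [rpow_one, div_le_div_iff₀ (by positivity) hL]
  nlinarith [mul_le_mul_of_nonneg_left (one_le_pow₀ hi : (1 : ℝ) ≤ i ^ 2) hL.le]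

def commCoeff (N : ℕ) (k : ℤ) : ℂ :=
  ∑' l : ℤ, (((|k - l| - |l| : ℤ) : ℝ) : ℂ) * uCoeff N l * starRingEnd ℂ (uCoeff N (l - k))

theorem commCoeff_eq_zero {N : ℕ} {k : ℤ} (hk : (N : ℤ) ≤ |k|) : commCoeff N k = 0 := by
  refine (tsum_congr fun l => ?_).trans tsum_zero
  by_cases hl : l < 1 ∨ (N : ℤ) < l
  · simp [uCoeff_eq_zero hl]
  · rw [uCoeff_eq_zero (n := l - k) (by rw [le_abs'] at hk; omega)]
    simp

theorem sum_sq_norm_commCoeff_le_commNorm_sq (N : ℕ) (s : Finset ℤ) :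
    ∑ k ∈ s, ‖commCoeff N k‖ ^ 2 ≤ commNorm N ^ 2 := by
  rw [commNorm, sq_sqrt (tsum_nonneg fun _ => by positivity)]
  refine (summable_of_ne_finset_zero (s := Ioo (-(N : ℤ)) N) fun k hk => ?_).sum_le_tsum s
    fun _ _ => by positivity
  rw [mem_Ioo, not_and_or, not_lt, not_lt] at hk
  rw [commCoeff_eq_zero (by rw [le_abs']; omega), norm_zero, zero_pow two_ne_zero]

theorem commCoeff_neg_natCast (N m : ℕ) :
    commCoeff N (-m) = ((m * ∑ i ∈ Icc 1 N, uCoeffReal N i * uCoeffReal N ↑(i + m) : ℝ) : ℂ) := by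
  rw [commCoeff, tsum_int_eq_sum_Icc (N := N) fun l hl => by simp [uCoeff_eq_zero hl], mul_sum,
    ofReal_sum]
  refine sum_congr rfl fun i hi => ?_
  have hi : (1 : ℤ) ≤ i := by exact_mod_cast (mem_Icc.1 hi).1
  rw [abs_of_neg (by omega : -(m : ℤ) - i < 0), abs_of_pos (by omega : (0 : ℤ) < i),
    uCoeff_eq_ofReal, uCoeff_eq_ofReal, conj_ofReal, sub_neg_eq_add]
  push_cast
  ring

theorem harmonic_div_le_norm_commCoeff {N K m : ℕ} (hL : 0 < Real.log N) (hKm : K ≤ m)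
    (hmN : K + m ≤ N) : harmonic K / (2 * Real.log N) ≤ ‖commCoeff N (-m)‖ := by
  rw [commCoeff_neg_natCast, norm_real, norm_eq_abs, mul_sum]
  refine le_trans ?_ (le_abs_self _)
  have hsub : Icc 1 K ⊆ Icc 1 N := Icc_subset_Icc le_rfl (by omega)
  calc harmonic K / (2 * Real.log N) = ∑ i ∈ Icc 1 K, (2 * Real.log N * i)⁻¹ := by
        rw [harmonic_eq_sum_Icc, div_eq_mul_inv]
        push_cast
        rw [sum_mul]
        exact sum_congr rfl fun i _ => by ring
    _ ≤ ∑ i ∈ Icc 1 K, m * (uCoeffReal N i * uCoeffReal N ↑(i + m)) :=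
        sum_le_sum fun i hi => ?_
    _ ≤ ∑ i ∈ Icc 1 N, m * (uCoeffReal N i * uCoeffReal N ↑(i + m)) :=
        sum_le_sum_of_subset_of_nonneg hsub fun i _ _ => by
          have := uCoeffReal_nonneg N i
          have := uCoeffReal_nonneg N ↑(i + m)
          positivity
  rw [mem_Icc] at hi
  rw [uCoeffReal_natCast hi.1 (by omega), uCoeffReal_natCast (by omega) (by omega)]
  have hi' : (1 : ℝ) ≤ i := by exact_mod_cast hi.1
  have him : (i : ℝ) ≤ m := by exact_mod_cast hi.2.trans hKm
  have hsq := mul_self_sqrt hL.le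
  push_cast
  field_simp
  nlinarith

theorem div_sixteen_le_commNorm_sq {K : ℕ} (hK : 1 ≤ K) : (K : ℝ) / 16 ≤ commNorm (4 * K) ^ 2 := by
  have hK' : (1 : ℝ) ≤ K := by exact_mod_cast hK
  have hL : 0 < Real.log ↑(4 * K) := log_pos (by push_cast; linarith)
  have hquarter : 1 / 4 ≤ harmonic K / (2 * Real.log ↑(4 * K)) := by
    have hlog : Real.log ↑(4 * K) ≤ 2 * Real.log ↑(K + 1) :=
      calc Real.log ↑(4 * K) ≤ Real.log (↑(K + 1) ^ 2) :=
            log_le_log (by positivity) (by push_cast; nlinarith)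
        _ = 2 * Real.log ↑(K + 1) := by rw [log_pow]; norm_num
    rw [le_div_iff₀ (by positivity)]
    linarith [log_add_one_le_harmonic K]
  calc (K : ℝ) / 16 = ∑ _m ∈ Ico K (2 * K), (1 / 4 : ℝ) ^ 2 := by
        rw [sum_const, Nat.card_Ico, show 2 * K - K = K by omega, nsmul_eq_mul]
        ring
    _ ≤ ∑ m ∈ Ico K (2 * K), ‖commCoeff (4 * K) (-m)‖ ^ 2 := sum_le_sum fun m hm => by
        rw [mem_Ico] at hm
        gcongr
        exact hquarter.trans (harmonic_div_le_norm_commCoeff hL hm.1 (by omega))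
    _ = ∑ k ∈ (Ico K (2 * K)).image (fun m : ℕ => -(m : ℤ)), ‖commCoeff (4 * K) k‖ ^ 2 := by
        rw [sum_image fun a _ b _ h => by simpa using h]
    _ ≤ commNorm (4 * K) ^ 2 := sum_sq_norm_commCoeff_le_commNorm_sq _ _

/-- Failure of the commutator estimate
`‖u|D|ū - ū|D|u‖_{L²} ≤ C ‖u‖_{H^{1/2}} ‖u‖_{H^1}`: on the family `u_N`, the
ratio of the two sides is unbounded as `N → ∞`. -/
theorem commutator_estimate_fails :
    ∀ C : ℝ, ∃ N : ℕ, 2 ≤ N ∧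
      C * (sobNormSeq (1 / 2) N * sobNormSeq 1 N) < commNorm N := by
  intro C
  obtain ⟨K, hK, hCK⟩ : ∃ K : ℕ, 1 ≤ K ∧ max 1 (512 * C ^ 2) < Real.log ↑(4 * K) :=
    ((Filter.eventually_ge_atTop 1).and
      (((tendsto_log_atTop.comp tendsto_natCast_atTop_atTop).comp
        (Filter.tendsto_id.const_mul_atTop' four_pos)).eventually_gt_atTop _)).exists
  refine ⟨4 * K, by omega, ?_⟩
  have hL : 1 ≤ Real.log ↑(4 * K) := (le_max_left _ _).trans hCK.le
  have hsq : (C * (sobNormSeq (1 / 2) (4 * K) * sobNormSeq 1 (4 * K))) ^ 2 < commNorm (4 * K) ^ 2 :=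
    calc _ = C ^ 2 * sobNormSeq (1 / 2) (4 * K) ^ 2 * sobNormSeq 1 (4 * K) ^ 2 := by ring
      _ ≤ C ^ 2 * 4 * (2 * ↑(4 * K) / Real.log ↑(4 * K)) := by
          gcongr
          exacts [sobNormSeq_half_sq_le hL, sobNormSeq_one_sq_le (by linarith)]
      _ = 512 * C ^ 2 / Real.log ↑(4 * K) * (K / 16) := by push_cast; ring
      _ < 1 * (K / 16) := by
          gcongr
          rw [div_lt_one (by linarith)]
          exact (le_max_right _ _).trans_lt hCK
      _ ≤ commNorm (4 * K) ^ 2 := (one_mul _).trans_le (div_sixteen_le_commNorm_sq hK)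
  exact (le_abs_self _).trans_lt (abs_lt_of_sq_lt_sq hsq (sqrt_nonneg _))

end
end
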